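/- arXiv:1806.06908 — 4 statements merged into one kernel-verified Lean document; each statement's English description precedes it below -/
import Mathlib

section
/- Let g₁, g₂ ∈ (0,1] and p₁, p₂ ∈ (0,1) with p₁ > p₂. For each k ∈ ℕ let S₁,k and S₂,k be independent random variables with S₁,k distributed Binomial(⌊k·g₁⌋, p₁) and S₂,k distributed Binomial(⌊k·g₂⌋, p₂). Then lim_{k→∞} −(1/k)·log P( S₁,k/⌊k·g₁⌋ ≤ S₂,k/⌊k·g₂⌋ ) = inf_{a ∈ [0,1]} { g₁·KL(a‖p₁) + g₂·KL(a‖p₂) }. -/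
open Filter

/-- Bernoulli Kullback–Leibler divergence `KL(a‖b)`, with the convention `0·log 0 = 0`
(automatic here since `Real.log 0 = 0` and multiplication by `0`). -/
noncomputable def klBer (a b : ℝ) : ℝ :=
  a * Real.log (a / b) + (1 - a) * Real.log ((1 - a) / (1 - b))

/-!
Method of types. For `0 < n` and `i ≤ n` the binomial mass `C(n,i) p^i (1-p)^(n-i)` equals
`C(n,i) x^i (1-x)^(n-i) · exp(-n KL(x‖p))` with `x = i/n`, and the first factor lies in
`[1/(n+1), 1]` because `i` is a mode of Binomial(n, x). The misranking probability is a sum of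
at most `(k+1)^2` products of two such masses over pairs of types `x = i/n₁ ≤ y = j/n₂`, so up to
polynomial factors it is `exp(-min (n₁ KL(x‖p₁) + n₂ KL(y‖p₂)))`. As `KL(·‖p)` decreases on
`[0,p]` and increases on `[p,1]` and `p₂ < p₁`, moving `x` and `y` to a common point does not
increase either divergence, so the constrained minimum is the unconstrained one over `x = y = a`,
which the pair `⌊n₁ a⌋/n₁ ≤ ⌈n₂ a⌉/n₂` attains in the limit. Replacing `n = ⌊k g⌋` by `k g`
costs `O(1)` in the exponent.
-/

open Real Set Topology InformationTheory

lemma monotoneOn_klFun : MonotoneOn klFun (Ici 1) := by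
  refine monotoneOn_of_deriv_nonneg (convex_Ici 1) continuous_klFun.continuousOn
    (fun x hx => (hasDerivAt_klFun ?_).differentiableAt.differentiableWithinAt) fun x hx => ?_
  all_goals rw [interior_Ici] at hx
  · exact (zero_lt_one.trans hx).ne'
  · rw [deriv_klFun]; exact log_nonneg hx.out.le

lemma antitoneOn_klFun : AntitoneOn klFun (Icc 0 1) := by
  refine antitoneOn_of_deriv_nonpos (convex_Icc 0 1) continuous_klFun.continuousOn
    (fun x hx => (hasDerivAt_klFun ?_).differentiableAt.differentiableWithinAt) fun x hx => ?_
  all_goals rw [interior_Icc] at hx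
  · exact hx.1.ne'
  · rw [deriv_klFun]; exact log_nonpos hx.1.le hx.2.le

section KL

variable {a b : ℝ}

lemma klBer_eq_klFun (hb : b ∈ Ioo 0 1) :
    klBer a b = b * klFun (a / b) + (1 - b) * klFun ((1 - a) / (1 - b)) := by
  have hb₀ : b ≠ 0 := hb.1.ne'
  have hb₁ : 1 - b ≠ 0 := (sub_pos.2 hb.2).ne'
  simp only [klBer, klFun_apply]
  field_simp
  ring

lemma continuous_klBer_left (hb : b ∈ Ioo 0 1) : Continuous fun a => klBer a b := by
  simp only [klBer_eq_klFun hb]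
  fun_prop

lemma klBer_nonneg (ha : a ∈ Icc 0 1) (hb : b ∈ Ioo 0 1) : 0 ≤ klBer a b := by
  have h1b := sub_pos.2 hb.2
  rw [klBer_eq_klFun hb]
  exact add_nonneg (mul_nonneg hb.1.le (klFun_nonneg (div_nonneg ha.1 hb.1.le)))
    (mul_nonneg h1b.le (klFun_nonneg (div_nonneg (sub_nonneg.2 ha.2) h1b.le)))

lemma monotoneOn_klBer (hb : b ∈ Ioo 0 1) : MonotoneOn (fun a => klBer a b) (Icc b 1) := by
  intro a ha a' ha' haa'
  have h1b := sub_pos.2 hb.2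
  simp only [klBer_eq_klFun hb]
  gcongr ?_ + ?_
  · refine mul_le_mul_of_nonneg_left (monotoneOn_klFun ?_ ?_ ?_) hb.1.le
    · exact (one_le_div hb.1).2 ha.1
    · exact (one_le_div hb.1).2 ha'.1
    · exact div_le_div_of_nonneg_right haa' hb.1.le
  · refine mul_le_mul_of_nonneg_left (antitoneOn_klFun ?_ ?_ ?_) h1b.le
    · exact ⟨div_nonneg (by linarith [ha'.2]) h1b.le, (div_le_one h1b).2 (by linarith [ha'.1])⟩
    · exact ⟨div_nonneg (by linarith [ha.2]) h1b.le, (div_le_one h1b).2 (by linarith [ha.1])⟩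
    · exact div_le_div_of_nonneg_right (by linarith) h1b.le

lemma antitoneOn_klBer (hb : b ∈ Ioo 0 1) : AntitoneOn (fun a => klBer a b) (Icc 0 b) := by
  intro a ha a' ha' haa'
  have h1b := sub_pos.2 hb.2
  simp only [klBer_eq_klFun hb]
  gcongr ?_ + ?_
  · refine mul_le_mul_of_nonneg_left (antitoneOn_klFun ?_ ?_ ?_) hb.1.le
    · exact ⟨div_nonneg ha.1 hb.1.le, (div_le_one hb.1).2 ha.2⟩
    · exact ⟨div_nonneg ha'.1 hb.1.le, (div_le_one hb.1).2 ha'.2⟩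
    · exact div_le_div_of_nonneg_right haa' hb.1.le
  · refine mul_le_mul_of_nonneg_left (monotoneOn_klFun ?_ ?_ ?_) h1b.le
    · exact (one_le_div h1b).2 (by linarith [ha'.2])
    · exact (one_le_div h1b).2 (by linarith [ha.2])
    · exact div_le_div_of_nonneg_right (by linarith) h1b.le

lemma exists_klBer_le (hb : b ∈ Ioo 0 1) : ∃ M, ∀ a ∈ Icc (0 : ℝ) 1, klBer a b ≤ M := by
  obtain ⟨M, hM⟩ := isCompact_Icc.bddAbove_image (continuous_klBer_left hb).continuousOn
  exact ⟨M, fun a ha => hM (mem_image_of_mem _ ha)⟩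

end KL

lemma exists_klBer_le_of_le {p₁ p₂ x y : ℝ} (hp₁ : p₁ ∈ Ioo 0 1) (hp₂ : p₂ ∈ Ioo 0 1)
    (hpp : p₂ ≤ p₁) (hx : x ∈ Icc 0 1) (hy : y ∈ Icc 0 1) (hxy : x ≤ y) :
    ∃ a ∈ Icc 0 1, klBer a p₁ ≤ klBer x p₁ ∧ klBer a p₂ ≤ klBer y p₂ := by
  rcases le_total y p₂ with hyp | hyp
  · exact ⟨y, hy, antitoneOn_klBer hp₁ ⟨hx.1, by linarith⟩ ⟨hy.1, by linarith⟩ hxy, le_rfl⟩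
  rcases le_total p₁ x with hxp | hxp
  · exact ⟨x, hx, le_rfl, monotoneOn_klBer hp₂ ⟨by linarith, hx.2⟩ ⟨by linarith, hy.2⟩ hxy⟩
  have hp₂a : p₂ ≤ max x p₂ := le_max_right _ _
  have hay : max x p₂ ≤ y := max_le hxy hyp
  exact ⟨max x p₂, ⟨hp₂.1.le.trans hp₂a, hay.trans hy.2⟩,
    antitoneOn_klBer hp₁ ⟨hx.1, hxp⟩ ⟨hx.1.trans (le_max_left _ _), max_le hxp hpp⟩
      (le_max_left _ _),
    monotoneOn_klBer hp₂ ⟨hp₂a, hay.trans hy.2⟩ ⟨hyp, hy.2⟩ hay⟩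

-- `t * x = m` encodes `x = m / t` without excluding `x = 0` (which then forces `m = 0`).
lemma pow_eq_pow_mul_exp_neg_mul_log_div {x p t : ℝ} {m : ℕ} (hx : 0 ≤ x) (hp : 0 < p)
    (hm : t * x = m) : p ^ m = x ^ m * exp (-(t * (x * log (x / p)))) := by
  rcases hx.eq_or_lt with rfl | hx
  · obtain rfl : m = 0 := by exact_mod_cast (mul_zero t ▸ hm).symm
    simp
  rw [← mul_assoc, hm, ← mul_neg, ← log_inv, inv_div, exp_nat_mul, exp_log (div_pos hp hx),
    ← mul_pow, mul_div_cancel₀ _ hx.ne']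

noncomputable def binomialMass (n i : ℕ) (p : ℝ) : ℝ :=
  n.choose i * p ^ i * (1 - p) ^ (n - i)

namespace binomialMass

variable {n i j : ℕ} {p x : ℝ}

lemma nonneg (hp : p ∈ Icc 0 1) : 0 ≤ binomialMass n i p := by
  have := sub_nonneg.2 hp.2
  have := hp.1
  unfold binomialMass
  positivity

lemma sum_eq_one (n : ℕ) (p : ℝ) : ∑ i ∈ Finset.range (n + 1), binomialMass n i p = 1 := by
  simpa [bernsteinPolynomial, binomialMass, Polynomial.eval_finsetSum]
    using congrArg (Polynomial.eval p) (bernsteinPolynomial.sum ℝ n)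

lemma le_one (hp : p ∈ Icc 0 1) (hi : i ≤ n) : binomialMass n i p ≤ 1 :=
  sum_eq_one n p ▸ Finset.single_le_sum (f := fun i => binomialMass n i p)
    (fun _ _ => nonneg hp) (Finset.mem_range_succ_iff.2 hi)

lemma succ_mul_eq (n j : ℕ) (x : ℝ) :
    binomialMass n (j + 1) x * ((j + 1) * (1 - x)) =
      binomialMass n j x * ((n - j : ℕ) * x) := by
  have hchoose : (n.choose (j + 1) : ℝ) * (j + 1) = n.choose j * (n - j : ℕ) := by
    exact_mod_cast Nat.choose_succ_right_eq n j
  rcases lt_or_ge j n with hj | hj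
  · obtain ⟨m, hm⟩ : ∃ m, n - j = m + 1 := ⟨n - j - 1, by omega⟩
    rw [hm] at hchoose
    rw [binomialMass, binomialMass, hm, show n - (j + 1) = m by omega]
    linear_combination x ^ (j + 1) * (1 - x) ^ (m + 1) * hchoose
  · rw [binomialMass, binomialMass, Nat.sub_eq_zero_of_le hj, Nat.cast_zero] at *
    linear_combination x ^ (j + 1) * (1 - x) ^ (n - (j + 1)) * (1 - x) * hchoose

lemma le_succ (hx : x ∈ Ioo 0 1) (h : (j + 1 : ℝ) ≤ (n + 1) * x) :
    binomialMass n j x ≤ binomialMass n (j + 1) x := by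
  have hjn : j ≤ n := by
    have : (j : ℝ) < n := by nlinarith [hx.2]
    exact_mod_cast this.le
  have hc : 0 < (j + 1 : ℝ) * (1 - x) := by have := hx.2; positivity
  refine le_of_mul_le_mul_right ?_ hc
  rw [succ_mul_eq, Nat.cast_sub hjn]
  exact mul_le_mul_of_nonneg_left (by linarith) (nonneg (Ioo_subset_Icc_self hx))

lemma succ_le (hx : x ∈ Ioo 0 1) (h : (n + 1) * x ≤ j + 1) :
    binomialMass n (j + 1) x ≤ binomialMass n j x := by
  have hc : 0 < (j + 1 : ℝ) * (1 - x) := by have := hx.2; positivity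
  refine le_of_mul_le_mul_right ?_ hc
  rw [succ_mul_eq]
  refine mul_le_mul_of_nonneg_left ?_ (nonneg (Ioo_subset_Icc_self hx))
  rcases le_total j n with hjn | hnj
  · rw [Nat.cast_sub hjn]; linarith
  · rw [Nat.sub_eq_zero_of_le hnj, Nat.cast_zero, zero_mul]; exact hc.le

lemma le_of_mode (hx : x ∈ Ioo 0 1) (hi₁ : (i : ℝ) ≤ (n + 1) * x) (hi₂ : (n + 1) * x ≤ i + 1)
    (j : ℕ) : binomialMass n j x ≤ binomialMass n i x := by
  rcases le_total j i with hji | hij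
  · have increasing : ∀ m, j ≤ m → (m : ℝ) ≤ (n + 1) * x →
        binomialMass n j x ≤ binomialMass n m x := by
      intro m hjm
      induction m, hjm using Nat.le_induction with
      | base => exact fun _ => le_rfl
      | succ m _ ih =>
        intro hm
        push_cast at hm
        exact (ih (by linarith)).trans (le_succ hx hm)
    exact increasing i hji hi₁
  · exact Nat.rel_of_forall_rel_succ_of_le_of_le (· ≥ ·) (f := fun m => binomialMass n m x)
      (fun m hm => succ_le hx (hi₂.trans (by exact_mod_cast Nat.succ_le_succ hm))) le_rfl hij

lemma one_le_succ_mul_self_div (hn : 0 < n) (hi : i ≤ n) :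
    1 ≤ (n + 1) * binomialMass n i (i / n) := by
  rcases Nat.eq_zero_or_pos i with rfl | hi₀
  · simp [binomialMass]
  rcases hi.eq_or_lt with rfl | hin
  · simp [binomialMass, hn.ne']
  have hnR : (0 : ℝ) < n := by exact_mod_cast hn
  have hx : (i / n : ℝ) ∈ Ioo 0 1 :=
    ⟨by positivity, (div_lt_one hnR).2 (by exact_mod_cast hin)⟩
  have hnx : (n + 1) * (i / n : ℝ) = i + i / n := by field_simp
  have hmode := le_of_mode (n := n) (i := i) hx (by rw [hnx]; linarith [hx.1])
    (by rw [hnx]; linarith [hx.2])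
  calc (1 : ℝ) = ∑ j ∈ Finset.range (n + 1), binomialMass n j (i / n) := (sum_eq_one n _).symm
    _ ≤ ∑ _j ∈ Finset.range (n + 1), binomialMass n i (i / n) :=
        Finset.sum_le_sum fun j _ => hmode j
    _ = (n + 1) * binomialMass n i (i / n) := by simp

lemma eq_mul_exp_neg_klBer (hn : 0 < n) (hi : i ≤ n) (hp : p ∈ Ioo 0 1) :
    binomialMass n i p = binomialMass n i (i / n) * exp (-(n * klBer (i / n) p)) := by
  have hnR : (n : ℝ) ≠ 0 := by exact_mod_cast hn.ne'
  have hx : (i / n : ℝ) ∈ Icc 0 1 :=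
    ⟨by positivity, div_le_one_of_le₀ (by exact_mod_cast hi) (by positivity)⟩
  have hi' : (n : ℝ) * (i / n) = i := mul_div_cancel₀ _ hnR
  have hni : (n : ℝ) * (1 - i / n) = (n - i : ℕ) := by rw [Nat.cast_sub hi, mul_sub, hi', mul_one]
  rw [binomialMass, binomialMass, klBer, mul_add, neg_add, exp_add,
    pow_eq_pow_mul_exp_neg_mul_log_div hx.1 hp.1 hi',
    pow_eq_pow_mul_exp_neg_mul_log_div (sub_nonneg.2 hx.2) (sub_pos.2 hp.2) hni]
  ring

lemma le_exp_neg_klBer (hn : 0 < n) (hi : i ≤ n) (hp : p ∈ Ioo 0 1) :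
    binomialMass n i p ≤ exp (-(n * klBer (i / n) p)) := by
  rw [eq_mul_exp_neg_klBer hn hi hp]
  refine mul_le_of_le_one_left (exp_nonneg _) (le_one ⟨by positivity, ?_⟩ hi)
  exact div_le_one_of_le₀ (by exact_mod_cast hi) (by positivity)

lemma exp_neg_klBer_le (hn : 0 < n) (hi : i ≤ n) (hp : p ∈ Ioo 0 1) :
    exp (-(n * klBer (i / n) p)) ≤ (n + 1) * binomialMass n i p := by
  rw [eq_mul_exp_neg_klBer hn hi hp, ← mul_assoc]
  exact le_mul_of_one_le_left (exp_nonneg _) (one_le_succ_mul_self_div hn hi)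

end binomialMass

noncomputable def misrankingProb (p₁ p₂ : ℝ) (n₁ n₂ : ℕ) : ℝ :=
  ∑ i ∈ Finset.range (n₁ + 1), ∑ j ∈ Finset.range (n₂ + 1),
    binomialMass n₁ i p₁ * binomialMass n₂ j p₂ * if (i : ℝ) / n₁ ≤ (j : ℝ) / n₂ then 1 else 0

section misrankingProb

variable {p₁ p₂ : ℝ} {n₁ n₂ : ℕ}

lemma misrankingProb_le (hp₁ : p₁ ∈ Ioo 0 1) (hp₂ : p₂ ∈ Ioo 0 1) (hn₁ : 0 < n₁) (hn₂ : 0 < n₂)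
    {E : ℝ} (hE : ∀ i ≤ n₁, ∀ j ≤ n₂, (i : ℝ) / n₁ ≤ (j : ℝ) / n₂ →
      E ≤ n₁ * klBer (i / n₁) p₁ + n₂ * klBer (j / n₂) p₂) :
    misrankingProb p₁ p₂ n₁ n₂ ≤ (n₁ + 1) * (n₂ + 1) * exp (-E) := by
  have hterm : ∀ i ∈ Finset.range (n₁ + 1), ∀ j ∈ Finset.range (n₂ + 1),
      binomialMass n₁ i p₁ * binomialMass n₂ j p₂ *
        (if (i : ℝ) / n₁ ≤ (j : ℝ) / n₂ then 1 else 0) ≤ exp (-E) := by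
    intro i hi j hj
    rw [Finset.mem_range_succ_iff] at hi hj
    split_ifs with hij
    · rw [mul_one]
      calc binomialMass n₁ i p₁ * binomialMass n₂ j p₂
          ≤ exp (-(n₁ * klBer (i / n₁) p₁)) * exp (-(n₂ * klBer (j / n₂) p₂)) :=
            mul_le_mul (binomialMass.le_exp_neg_klBer hn₁ hi hp₁)
              (binomialMass.le_exp_neg_klBer hn₂ hj hp₂)
              (binomialMass.nonneg (Ioo_subset_Icc_self hp₂)) (exp_nonneg _)
        _ ≤ exp (-E) := by
            rw [← exp_add, exp_le_exp]
            linarith [hE i hi j hj hij]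
    · rw [mul_zero]; exact (exp_pos _).le
  calc misrankingProb p₁ p₂ n₁ n₂
      ≤ ∑ _i ∈ Finset.range (n₁ + 1), ∑ _j ∈ Finset.range (n₂ + 1), exp (-E) :=
        Finset.sum_le_sum fun i hi => Finset.sum_le_sum fun j hj => hterm i hi j hj
    _ = (n₁ + 1) * (n₂ + 1) * exp (-E) := by simp [mul_assoc]

lemma binomialMass_mul_le_misrankingProb (hp₁ : p₁ ∈ Icc 0 1) (hp₂ : p₂ ∈ Icc 0 1) {i j : ℕ}
    (hi : i ≤ n₁) (hj : j ≤ n₂) (hij : (i : ℝ) / n₁ ≤ (j : ℝ) / n₂) :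
    binomialMass n₁ i p₁ * binomialMass n₂ j p₂ ≤ misrankingProb p₁ p₂ n₁ n₂ := by
  have hterm (i' j' : ℕ) : 0 ≤ binomialMass n₁ i' p₁ * binomialMass n₂ j' p₂ *
      (if (i' : ℝ) / n₁ ≤ (j' : ℝ) / n₂ then 1 else 0) := by
    have := binomialMass.nonneg (n := n₁) (i := i') hp₁
    have := binomialMass.nonneg (n := n₂) (i := j') hp₂
    split_ifs <;> positivity
  refine le_trans ?_ (Finset.single_le_sum (fun i' _ => Finset.sum_nonneg fun j' _ => hterm i' j')
    (Finset.mem_range_succ_iff.2 hi))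
  refine le_trans ?_
    (Finset.single_le_sum (fun j' _ => hterm i j') (Finset.mem_range_succ_iff.2 hj))
  rw [if_pos hij, mul_one]

lemma exp_le_misrankingProb (hp₁ : p₁ ∈ Ioo 0 1) (hp₂ : p₂ ∈ Ioo 0 1) (hn₁ : 0 < n₁)
    (hn₂ : 0 < n₂) {i j : ℕ} (hi : i ≤ n₁) (hj : j ≤ n₂) (hij : (i : ℝ) / n₁ ≤ (j : ℝ) / n₂) :
    exp (-(n₁ * klBer (i / n₁) p₁ + n₂ * klBer (j / n₂) p₂)) ≤
      (n₁ + 1) * (n₂ + 1) * misrankingProb p₁ p₂ n₁ n₂ := by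
  have hb₁ := binomialMass.nonneg (n := n₁) (i := i) (Ioo_subset_Icc_self hp₁)
  calc exp (-(n₁ * klBer (i / n₁) p₁ + n₂ * klBer (j / n₂) p₂))
      = exp (-(n₁ * klBer (i / n₁) p₁)) * exp (-(n₂ * klBer (j / n₂) p₂)) := by
        rw [← exp_add, neg_add]
    _ ≤ ((n₁ + 1) * binomialMass n₁ i p₁) * ((n₂ + 1) * binomialMass n₂ j p₂) :=
        mul_le_mul (binomialMass.exp_neg_klBer_le hn₁ hi hp₁)
          (binomialMass.exp_neg_klBer_le hn₂ hj hp₂) (exp_nonneg _) (by positivity)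
    _ = (n₁ + 1) * (n₂ + 1) * (binomialMass n₁ i p₁ * binomialMass n₂ j p₂) := by ring
    _ ≤ (n₁ + 1) * (n₂ + 1) * misrankingProb p₁ p₂ n₁ n₂ := by
        gcongr
        exact binomialMass_mul_le_misrankingProb (Ioo_subset_Icc_self hp₁)
          (Ioo_subset_Icc_self hp₂) hi hj hij

end misrankingProb

lemma tendsto_log_succ_div_atTop : Tendsto (fun k : ℕ => log (k + 1) / k) atTop (𝓝 0) := by
  have := (tendsto_pow_log_div_mul_add_atTop 1 (-1) 1 one_ne_zero).comp
    (tendsto_atTop_add_const_right atTop 1 tendsto_natCast_atTop_atTop)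
  simpa [Function.comp_def] using this

lemma tendsto_neg_log_div_of_exp_bounds {P u v : ℕ → ℝ} {L : ℝ} (d : ℕ)
    (hu : Tendsto u atTop (𝓝 L)) (hv : Tendsto v atTop (𝓝 L))
    (hlow : ∀ᶠ k in atTop, exp (-(k * u k)) ≤ (k + 1) ^ d * P k)
    (hup : ∀ᶠ k in atTop, P k ≤ (k + 1) ^ d * exp (-(k * v k))) :
    Tendsto (fun k : ℕ => -(1 / (k : ℝ)) * log (P k)) atTop (𝓝 L) := by
  have hε : Tendsto (fun k : ℕ => d * log (k + 1) / k) atTop (𝓝 0) := by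
    simpa [mul_div_assoc] using tendsto_log_succ_div_atTop.const_mul (d : ℝ)
  refine tendsto_of_tendsto_of_tendsto_of_le_of_le' (by simpa using hv.sub hε)
    (by simpa using hu.add hε) ?_ ?_
  · filter_upwards [hlow, hup, eventually_gt_atTop 0] with k hlow hup hk
    have hk : (0 : ℝ) < k := by exact_mod_cast hk
    have hP : 0 < P k := pos_of_mul_pos_right ((exp_pos _).trans_le hlow) (by positivity)
    have := log_le_log hP hup
    rw [log_mul (by positivity) (exp_pos _).ne', log_pow, log_exp] at this
    calc v k - d * log (k + 1) / k = (k * v k - d * log (k + 1)) / k := by field_simp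
      _ ≤ -log (P k) / k := by gcongr; linarith
      _ = _ := by ring
  · filter_upwards [hlow, eventually_gt_atTop 0] with k hlow hk
    have hk : (0 : ℝ) < k := by exact_mod_cast hk
    have hP : 0 < P k := pos_of_mul_pos_right ((exp_pos _).trans_le hlow) (by positivity)
    have := log_le_log (exp_pos _) hlow
    rw [log_mul (by positivity) hP.ne', log_pow, log_exp] at this
    calc -(1 / (k : ℝ)) * log (P k) = -log (P k) / k := by ring
      _ ≤ (k * u k + d * log (k + 1)) / k := by gcongr; linarith
      _ = u k + d * log (k + 1) / k := by field_simp

lemma tendsto_natFloor_mul_div_of_tendsto_atTop {N : ℕ → ℕ} (hN : Tendsto N atTop atTop)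
    {a : ℝ} (ha : 0 ≤ a) : Tendsto (fun k => (⌊N k * a⌋₊ : ℝ) / N k) atTop (𝓝 a) := by
  simpa only [mul_comm, Function.comp_def] using
    (tendsto_nat_floor_mul_div_atTop ha).comp (tendsto_natCast_atTop_atTop.comp hN)

lemma tendsto_natCeil_mul_div_of_tendsto_atTop {N : ℕ → ℕ} (hN : Tendsto N atTop atTop)
    {a : ℝ} (ha : 0 ≤ a) : Tendsto (fun k => (⌈N k * a⌉₊ : ℝ) / N k) atTop (𝓝 a) := by
  simpa only [mul_comm, Function.comp_def] using
    (tendsto_nat_ceil_mul_div_atTop ha).comp (tendsto_natCast_atTop_atTop.comp hN)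

lemma tendsto_natFloor_natCast_mul_atTop {g : ℝ} (hg : 0 < g) :
    Tendsto (fun k : ℕ => ⌊k * g⌋₊) atTop atTop :=
  tendsto_nat_floor_atTop.comp (tendsto_natCast_atTop_atTop.atTop_mul_const hg)

section rate

variable {g₁ g₂ p₁ p₂ a : ℝ} {n₁ n₂ k : ℕ}

lemma exp_le_succ_sq_mul_misrankingProb (hp₁ : p₁ ∈ Ioo 0 1) (hp₂ : p₂ ∈ Ioo 0 1)
    (hn₁ : 0 < n₁) (hn₂ : 0 < n₂) (hn₁k : n₁ ≤ k) (hn₂k : n₂ ≤ k) (ha : a ∈ Icc 0 1) :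
    exp (-(n₁ * klBer (⌊n₁ * a⌋₊ / n₁) p₁ + n₂ * klBer (⌈n₂ * a⌉₊ / n₂) p₂)) ≤
      (k + 1) ^ 2 * misrankingProb p₁ p₂ n₁ n₂ := by
  have hn₁R : (0 : ℝ) < n₁ := by exact_mod_cast hn₁
  have hn₂R : (0 : ℝ) < n₂ := by exact_mod_cast hn₂
  have hi : ⌊n₁ * a⌋₊ ≤ n₁ := Nat.floor_le_of_le (mul_le_of_le_one_right hn₁R.le ha.2)
  have hj : ⌈n₂ * a⌉₊ ≤ n₂ := Nat.ceil_le.2 (mul_le_of_le_one_right hn₂R.le ha.2)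
  have hij : (⌊n₁ * a⌋₊ / n₁ : ℝ) ≤ ⌈n₂ * a⌉₊ / n₂ :=
    calc (⌊n₁ * a⌋₊ / n₁ : ℝ) ≤ a :=
          div_le_of_le_mul₀ hn₁R.le ha.1
            ((Nat.floor_le (mul_nonneg hn₁R.le ha.1)).trans_eq (mul_comm _ _))
      _ ≤ ⌈n₂ * a⌉₊ / n₂ := (le_div_iff₀ hn₂R).2 ((mul_comm _ _).trans_le (Nat.le_ceil _))
  have hle := exp_le_misrankingProb hp₁ hp₂ hn₁ hn₂ hi hj hij
  have hP : 0 ≤ misrankingProb p₁ p₂ n₁ n₂ :=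
    nonneg_of_mul_nonneg_right ((exp_pos _).le.trans hle) (by positivity)
  refine hle.trans ?_
  have h₁ : (n₁ + 1 : ℝ) ≤ k + 1 := by exact_mod_cast Nat.succ_le_succ hn₁k
  have h₂ : (n₂ + 1 : ℝ) ≤ k + 1 := by exact_mod_cast Nat.succ_le_succ hn₂k
  rw [sq]
  gcongr

lemma misrankingProb_le_succ_sq_mul_exp (hp₁ : p₁ ∈ Ioo 0 1) (hp₂ : p₂ ∈ Ioo 0 1) (hpp : p₂ ≤ p₁)
    (hg₁ : 0 ≤ g₁) (hg₂ : 0 ≤ g₂)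
    (ha : IsMinOn (fun a => g₁ * klBer a p₁ + g₂ * klBer a p₂) (Icc 0 1) a)
    {M₁ M₂ : ℝ} (hM₁ : ∀ x ∈ Icc 0 1, klBer x p₁ ≤ M₁) (hM₂ : ∀ x ∈ Icc 0 1, klBer x p₂ ≤ M₂)
    (hn₁ : 0 < n₁) (hn₂ : 0 < n₂) (hn₁k : n₁ ≤ k) (hn₂k : n₂ ≤ k)
    (hkn₁ : k * g₁ - 1 ≤ n₁) (hkn₂ : k * g₂ - 1 ≤ n₂) :
    misrankingProb p₁ p₂ n₁ n₂ ≤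
      (k + 1) ^ 2 * exp (-(k * (g₁ * klBer a p₁ + g₂ * klBer a p₂) - (M₁ + M₂))) := by
  have hn₁R : (0 : ℝ) < n₁ := by exact_mod_cast hn₁
  have hn₂R : (0 : ℝ) < n₂ := by exact_mod_cast hn₂
  refine (misrankingProb_le hp₁ hp₂ hn₁ hn₂
    (E := k * (g₁ * klBer a p₁ + g₂ * klBer a p₂) - (M₁ + M₂)) fun i hi j hj hij => ?_).trans ?_
  · have hx : (i / n₁ : ℝ) ∈ Icc 0 1 :=
      ⟨by positivity, div_le_one_of_le₀ (by exact_mod_cast hi) hn₁R.le⟩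
    have hy : (j / n₂ : ℝ) ∈ Icc 0 1 :=
      ⟨by positivity, div_le_one_of_le₀ (by exact_mod_cast hj) hn₂R.le⟩
    obtain ⟨b, hb, hb₁, hb₂⟩ := exists_klBer_le_of_le hp₁ hp₂ hpp hx hy hij
    have hF : g₁ * klBer a p₁ + g₂ * klBer a p₂ ≤
        g₁ * klBer (i / n₁) p₁ + g₂ * klBer (j / n₂) p₂ :=
      (ha hb).trans (add_le_add (mul_le_mul_of_nonneg_left hb₁ hg₁)
        (mul_le_mul_of_nonneg_left hb₂ hg₂))
    have hK₁ := klBer_nonneg hx hp₁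
    have hK₂ := klBer_nonneg hy hp₂
    nlinarith [hM₁ _ hx, hM₂ _ hy, mul_le_mul_of_nonneg_right hkn₁ hK₁,
      mul_le_mul_of_nonneg_right hkn₂ hK₂, mul_le_mul_of_nonneg_left hF (Nat.cast_nonneg k)]
  · have h₁ : (n₁ + 1 : ℝ) ≤ k + 1 := by exact_mod_cast Nat.succ_le_succ hn₁k
    have h₂ : (n₂ + 1 : ℝ) ≤ k + 1 := by exact_mod_cast Nat.succ_le_succ hn₂k
    rw [sq]
    gcongr

theorem tendsto_neg_log_misrankingProb (hg₁ : 0 < g₁) (hg₁' : g₁ ≤ 1) (hg₂ : 0 < g₂)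
    (hg₂' : g₂ ≤ 1) (hp₁ : p₁ ∈ Ioo 0 1) (hp₂ : p₂ ∈ Ioo 0 1) (hpp : p₂ ≤ p₁)
    (ha₀ : a ∈ Icc 0 1) (ha : IsMinOn (fun a => g₁ * klBer a p₁ + g₂ * klBer a p₂) (Icc 0 1) a) :
    Tendsto (fun k : ℕ => -(1 / (k : ℝ)) * log (misrankingProb p₁ p₂ ⌊k * g₁⌋₊ ⌊k * g₂⌋₊))
      atTop (𝓝 (g₁ * klBer a p₁ + g₂ * klBer a p₂)) := by
  obtain ⟨M₁, hM₁⟩ := exists_klBer_le hp₁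
  obtain ⟨M₂, hM₂⟩ := exists_klBer_le hp₂
  have hN₁ := tendsto_natFloor_natCast_mul_atTop hg₁
  have hN₂ := tendsto_natFloor_natCast_mul_atTop hg₂
  have hN_le {g : ℝ} (hg : g ≤ 1) (k : ℕ) : ⌊k * g⌋₊ ≤ k :=
    Nat.floor_le_of_le (mul_le_of_le_one_right k.cast_nonneg hg)
  have hN_ge (g : ℝ) (k : ℕ) : k * g - 1 ≤ ⌊k * g⌋₊ := (Nat.sub_one_lt_floor _).le
  refine tendsto_neg_log_div_of_exp_bounds 2
    (u := fun k => ⌊k * g₁⌋₊ / k * klBer (⌊⌊k * g₁⌋₊ * a⌋₊ / ⌊k * g₁⌋₊) p₁ +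
      ⌊k * g₂⌋₊ / k * klBer (⌈⌊k * g₂⌋₊ * a⌉₊ / ⌊k * g₂⌋₊) p₂)
    (v := fun k => g₁ * klBer a p₁ + g₂ * klBer a p₂ - (M₁ + M₂) / k) ?_ ?_ ?_ ?_
  · exact ((tendsto_natFloor_mul_div_of_tendsto_atTop tendsto_id hg₁.le).mul
      (((continuous_klBer_left hp₁).tendsto a).comp
        (tendsto_natFloor_mul_div_of_tendsto_atTop hN₁ ha₀.1))).add
      ((tendsto_natFloor_mul_div_of_tendsto_atTop tendsto_id hg₂.le).mul
        (((continuous_klBer_left hp₂).tendsto a).comp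
          (tendsto_natCeil_mul_div_of_tendsto_atTop hN₂ ha₀.1)))
  · simpa using tendsto_const_nhds.sub (tendsto_const_div_atTop_nhds_zero_nat (M₁ + M₂))
  · filter_upwards [hN₁.eventually_gt_atTop 0, hN₂.eventually_gt_atTop 0, eventually_gt_atTop 0]
      with k h₁ h₂ hk
    convert exp_le_succ_sq_mul_misrankingProb hp₁ hp₂ h₁ h₂ (hN_le hg₁' k) (hN_le hg₂' k) ha₀
      using 3
    field_simp
  · filter_upwards [hN₁.eventually_gt_atTop 0, hN₂.eventually_gt_atTop 0, eventually_gt_atTop 0]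
      with k h₁ h₂ hk
    convert misrankingProb_le_succ_sq_mul_exp hp₁ hp₂ hpp hg₁.le hg₂.le ha hM₁ hM₂ h₁ h₂
      (hN_le hg₁' k) (hN_le hg₂' k) (hN_ge g₁ k) (hN_ge g₂ k) using 3
    field_simp

end rate

/-- **Large deviations rate for misranking two binomial scores.**
Let `g₁, g₂ ∈ (0,1]`, `p₁ > p₂` in `(0,1)`.  With `S₁ₖ ~ Binomial(⌊k g₁⌋, p₁)` and
`S₂ₖ ~ Binomial(⌊k g₂⌋, p₂)` independent, the probability
`P(S₁ₖ/⌊k g₁⌋ ≤ S₂ₖ/⌊k g₂⌋)` — written out explicitly as a double sum over the two binomial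
distributions — satisfies
`-(1/k) log P → inf_{a ∈ [0,1]} { g₁ KL(a‖p₁) + g₂ KL(a‖p₂) }`. -/
theorem binomial_misranking_rate
    (g₁ g₂ p₁ p₂ : ℝ) (hg₁ : 0 < g₁) (hg₁' : g₁ ≤ 1) (hg₂ : 0 < g₂) (hg₂' : g₂ ≤ 1)
    (hp₁ : p₁ ∈ Set.Ioo (0 : ℝ) 1) (hp₂ : p₂ ∈ Set.Ioo (0 : ℝ) 1) (hpp : p₂ < p₁) :
    Tendsto
      (fun k : ℕ =>
        -(1 / (k : ℝ)) * Real.log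
          (∑ i ∈ Finset.range (⌊(k : ℝ) * g₁⌋₊ + 1),
            ∑ j ∈ Finset.range (⌊(k : ℝ) * g₂⌋₊ + 1),
              (((⌊(k : ℝ) * g₁⌋₊).choose i : ℝ) * p₁ ^ i *
                  (1 - p₁) ^ (⌊(k : ℝ) * g₁⌋₊ - i)) *
                (((⌊(k : ℝ) * g₂⌋₊).choose j : ℝ) * p₂ ^ j *
                  (1 - p₂) ^ (⌊(k : ℝ) * g₂⌋₊ - j)) *
                (if (i : ℝ) / (⌊(k : ℝ) * g₁⌋₊ : ℝ) ≤ (j : ℝ) / (⌊(k : ℝ) * g₂⌋₊ : ℝ)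
                  then 1 else 0)))
      atTop
      (nhds (⨅ a : Set.Icc (0 : ℝ) 1, g₁ * klBer a p₁ + g₂ * klBer a p₂)) := by
  obtain ⟨a, ha₀, ha⟩ := isCompact_Icc.exists_isMinOn (nonempty_Icc.2 zero_le_one)
    (f := fun a => g₁ * klBer a p₁ + g₂ * klBer a p₂)
    (((continuous_klBer_left hp₁).const_mul g₁).add
      ((continuous_klBer_left hp₂).const_mul g₂)).continuousOn
  rw [ha.iInf_eq ha₀]
  exact tendsto_neg_log_misrankingProb hg₁ hg₁' hg₂ hg₂' hp₁ hp₂ hpp.le ha₀ ha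
end

section
/- Let M ≥ 3 and let g₁,…,g_{M−2} > 0. Then there exists a unique equalized solution t* = (t*₀,…,t*_{M−1}), and t* maximizes the maximin objective R(t) = min{ −g₁·log(1−t₁), min_{2 ≤ i ≤ M−2} r_{g_{i−1},g_i}(t_{i−1},t_i), −g_{M−2}·log(t_{M−2}) } over all vectors t with 0 = t₀ ≤ t₁ ≤ ⋯ ≤ t_{M−1} = 1; moreover, any maximizer of R over this set equals t*. -/
/-- The pairwise large-deviations rate
`r_{g,h}(p,q) = -(g+h)·log[(1-p)^{g/(g+h)}·(1-q)^{h/(g+h)} + p^{g/(g+h)}·q^{h/(g+h)}]`. -/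
noncomputable def pairRate (g h p q : ℝ) : ℝ :=
  -(g + h) *
    Real.log ((1 - p) ^ (g / (g + h)) * (1 - q) ^ (h / (g + h))
      + p ^ (g / (g + h)) * q ^ (h / (g + h)))

/-- The `i`-th rate (for `1 ≤ i ≤ M-1`) of a level vector `t` with weights `g`:
`r₁ = -g₁·log(1-t₁)`, `rᵢ = r_{g_{i-1},g_i}(t_{i-1},t_i)` for `2 ≤ i ≤ M-2`, and
`r_{M-1} = -g_{M-2}·log(t_{M-2})`. -/
noncomputable def rateAt (M : ℕ) (g t : ℕ → ℝ) (i : ℕ) : ℝ :=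
  if i = 1 then -(g 1) * Real.log (1 - t 1)
  else if i = M - 1 then -(g (M - 2)) * Real.log (t (M - 2))
  else pairRate (g (i - 1)) (g i) (t (i - 1)) (t i)

/-- `t` is an equalized solution with `M` levels for the weights `g`, with common rate `r`:
`t₀ = 0 < t₁ < ⋯ < t_{M-2} < 1 = t_{M-1}` and all of the `M-1` rates equal `r`. -/
def IsEqualizedWithRate (M : ℕ) (g t : ℕ → ℝ) (r : ℝ) : Prop :=
  t 0 = 0 ∧ t (M - 1) = 1 ∧ (∀ i, i < M - 1 → t i < t (i + 1)) ∧
    ∀ i, 1 ≤ i → i ≤ M - 1 → rateAt M g t i = r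

/-- `t` is an equalized solution with `M` levels for the weights `g`. -/
def IsEqualizedSol (M : ℕ) (g t : ℕ → ℝ) : Prop :=
  ∃ r, IsEqualizedWithRate M g t r

/-- The maximin objective `R(t)`: the minimum of the `M-1` rates of the level vector `t`. -/
noncomputable def minRate (M : ℕ) (g t : ℕ → ℝ) : ℝ :=
  sInf {x | ∃ i, 1 ≤ i ∧ i ≤ M - 1 ∧ x = rateAt M g t i}

/-!
Each rate `rᵢ = r_{g_{i-1},g_i}(t_{i-1}, t_i)` increases in `tᵢ` and decreases in `t_{i-1}`,
because the Chernoff coefficient of `Bernoulli(p)` and `Bernoulli(q)` decreases as `q` moves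
away from `p`. So for a target rate `r > 0` the levels can be built greedily from `t₀ = 0`, each
`tᵢ` solving `rᵢ = r` (or stopping at `1`), and they depend continuously on `r`. As `r → 0` the
levels tend to `0`, while for large `r` they exceed `1/2`; the intermediate value theorem then
yields an `r` for which the last rate `-g_{M-2} log t_{M-2}` equals `r` too.

Conversely, if all rates of a monotone `t` are at least the common rate `r` of an equalized `t*`,
the monotonicity forces `t*ᵢ ≤ tᵢ` going up, the last rate forces `t_{M-2} = t*_{M-2}`, and
coming back down it forces `tᵢ = t*ᵢ`. This gives both the uniqueness and the maximin optimality.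
-/

open Real Set Filter Topology

/-- The Chernoff coefficient of order `a` of `Bernoulli(p)` and `Bernoulli(q)`. -/
noncomputable def affinity (a p q : ℝ) : ℝ :=
  (1 - p) ^ a * (1 - q) ^ (1 - a) + p ^ a * q ^ (1 - a)

section affinity
variable {a p q : ℝ}

lemma affinity_self (hp0 : 0 ≤ p) (hp1 : p ≤ 1) : affinity a p p = 1 := by
  rw [affinity, ← rpow_add' (by linarith) (by simp), ← rpow_add' hp0 (by simp)]
  simp

lemma affinity_pos (hp : 0 < p) (hq : 0 < q) (hp1 : p ≤ 1) (hq1 : q ≤ 1) :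
    0 < affinity a p q := by
  unfold affinity
  have := rpow_nonneg (sub_nonneg.2 hp1) a
  have := rpow_nonneg (sub_nonneg.2 hq1) (1 - a)
  have := rpow_pos_of_pos hp a
  have := rpow_pos_of_pos hq (1 - a)
  positivity

lemma continuous_affinity (ha : 0 ≤ a) (ha1 : a ≤ 1) :
    Continuous fun z : ℝ × ℝ => affinity a z.1 z.2 := by
  unfold affinity
  have h1 := continuous_rpow_const ha
  have h2 := continuous_rpow_const (sub_nonneg.2 ha1)
  fun_prop

lemma hasDerivAt_affinity_right (hq0 : 0 < q) (hq1 : q < 1) :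
    HasDerivAt (affinity a p)
      ((1 - a) * (p ^ a * q ^ (-a) - (1 - p) ^ a * (1 - q) ^ (-a))) q := by
  have h1 : HasDerivAt (fun q : ℝ => (1 - q) ^ (1 - a)) ((a - 1) * (1 - q) ^ (-a)) q := by
    simpa using ((hasDerivAt_id q).const_sub 1).rpow_const (p := 1 - a)
      (Or.inl (sub_ne_zero.2 hq1.ne'))
  have h2 : HasDerivAt (fun q : ℝ => q ^ (1 - a)) ((1 - a) * q ^ (-a)) q := by
    simpa using hasDerivAt_rpow_const (p := 1 - a) (Or.inl hq0.ne')
  exact ((h1.const_mul ((1 - p) ^ a)).add (h2.const_mul (p ^ a))).congr_deriv (by ring)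

lemma affinity_strictAntiOn_right (ha : 0 < a) (ha1 : a < 1) (hp0 : 0 < p) :
    StrictAntiOn (affinity a p) (Icc p 1) := by
  refine strictAntiOn_of_deriv_neg (convex_Icc p 1)
    ((continuous_affinity ha.le ha1.le).comp (Continuous.prodMk_right p)).continuousOn ?_
  rw [interior_Icc]
  rintro q ⟨hpq, hq1⟩
  have hq0 : 0 < q := hp0.trans hpq
  have key : (p / q) ^ a < ((1 - p) / (1 - q)) ^ a := by
    refine rpow_lt_rpow (by positivity) ?_ ha
    rw [div_lt_div_iff₀ hq0 (by linarith)]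
    nlinarith
  rw [div_rpow hp0.le hq0.le, div_rpow (by linarith) (by linarith)] at key
  rw [(hasDerivAt_affinity_right hq0 hq1).deriv, rpow_neg hq0.le, rpow_neg (by linarith)]
  exact mul_neg_of_pos_of_neg (by linarith) (sub_neg.2 key)

end affinity

section pairRate
variable {g h p q r : ℝ}

lemma pairRate_eq (hg : 0 < g) (hh : 0 < h) (p q : ℝ) :
    pairRate g h p q = -(g + h) * log (affinity (g / (g + h)) p q) := by
  rw [pairRate, affinity, show h / (g + h) = 1 - g / (g + h) by field_simp; ring]

lemma pairRate_symm : pairRate h g (1 - q) (1 - p) = pairRate g h p q := by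
  simp only [pairRate, sub_sub_cancel, add_comm h g]
  ring_nf

lemma pairRate_self (hg : 0 < g) (hh : 0 < h) (hp0 : 0 ≤ p) (hp1 : p ≤ 1) :
    pairRate g h p p = 0 := by
  simp [pairRate_eq hg hh, affinity_self hp0 hp1]

lemma continuousAt_pairRate (hg : 0 < g) (hh : 0 < h) (hp0 : 0 < p) (hq0 : 0 < q) (hp1 : p ≤ 1)
    (hq1 : q ≤ 1) : ContinuousAt (fun z : ℝ × ℝ => pairRate g h z.1 z.2) (p, q) := by
  simp only [pairRate_eq hg hh]
  have ha : 0 < g / (g + h) := by positivity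
  have ha1 : g / (g + h) ≤ 1 := div_le_one_of_le₀ (by linarith) (by positivity)
  exact continuousAt_const.mul ((continuous_affinity ha.le ha1).continuousAt.log
    (affinity_pos hp0 hq0 hp1 hq1).ne')

lemma pairRate_strictMonoOn_right (hg : 0 < g) (hh : 0 < h) (hp0 : 0 < p) :
    StrictMonoOn (pairRate g h p) (Icc p 1) := by
  intro q hq q' hq' hqq'
  have ha : 0 < g / (g + h) := by positivity
  have ha1 : g / (g + h) < 1 := (div_lt_one (by positivity)).2 (by linarith)
  rw [pairRate_eq hg hh, pairRate_eq hg hh, neg_mul, neg_mul, neg_lt_neg_iff]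
  refine mul_lt_mul_of_pos_left (log_lt_log ?_ ?_) (by positivity)
  · exact affinity_pos hp0 (hp0.trans_le (hq.1.trans hqq'.le)) (hq.1.trans hq.2) hq'.2
  · exact affinity_strictAntiOn_right ha ha1 hp0 hq hq' hqq'

lemma pairRate_strictAntiOn_left (hg : 0 < g) (hh : 0 < h) (hq1 : q < 1) :
    StrictAntiOn (fun p => pairRate g h p q) (Icc 0 q) := by
  intro p hp p' hp' hpp'
  dsimp only
  rw [← pairRate_symm, ← pairRate_symm (p := p)]
  exact pairRate_strictMonoOn_right hh hg (by linarith)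
    ⟨by linarith [hp'.2], by linarith [hp'.1]⟩ ⟨by linarith [hp.2], by linarith [hp.1]⟩
    (by linarith)

lemma pairRate_pos (hg : 0 < g) (hh : 0 < h) (hp0 : 0 < p) (hpq : p < q) (hq1 : q ≤ 1) :
    0 < pairRate g h p q := by
  have hp1 : p < 1 := hpq.trans_le hq1
  simpa [pairRate_self hg hh hp0.le hp1.le] using
    pairRate_strictMonoOn_right hg hh hp0 ⟨le_rfl, hp1.le⟩ ⟨hpq.le, hq1⟩ hpq

lemma pairRate_lt_pairRate {p' q' : ℝ} (hg : 0 < g) (hh : 0 < h) (hp : 0 < p) (hpp' : p ≤ p')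
    (hp'q' : p' ≤ q') (hq'q : q' ≤ q) (hq' : q' < 1) (hq : q ≤ 1) (hne : p < p' ∨ q' < q) :
    pairRate g h p' q' < pairRate g h p q := by
  have hanti := pairRate_strictAntiOn_left hg hh hq'
  have hmono := pairRate_strictMonoOn_right hg hh hp
  have hp'mem : p' ∈ Icc 0 q' := ⟨hp.le.trans hpp', hp'q'⟩
  have hpmem : p ∈ Icc 0 q' := ⟨hp.le, hpp'.trans hp'q'⟩
  have hq'mem : q' ∈ Icc p 1 := ⟨hpp'.trans hp'q', hq'.le⟩
  have hqmem : q ∈ Icc p 1 := ⟨hq'mem.1.trans hq'q, hq⟩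
  rcases hne with hlt | hlt
  · calc pairRate g h p' q' < pairRate g h p q' := hanti hpmem hp'mem hlt
      _ ≤ pairRate g h p q := hmono.monotoneOn hq'mem hqmem hq'q
  · calc pairRate g h p' q' ≤ pairRate g h p q' := hanti.antitoneOn hpmem hp'mem hpp'
      _ < pairRate g h p q := hmono hq'mem hqmem hlt

end pairRate

section sublevel
variable {f : ℝ → ℝ} {a b r x : ℝ}

lemma sSup_sublevel_mem (hab : a ≤ b) (hf : ContinuousOn f (Icc a b)) (ha : f a ≤ r) :
    sSup {x ∈ Icc a b | f x ≤ r} ∈ {x ∈ Icc a b | f x ≤ r} :=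
  (hf.preimage_isClosed_of_isClosed isClosed_Icc isClosed_Iic).csSup_mem
    ⟨a, ⟨le_rfl, hab⟩, ha⟩ ⟨b, fun _ hx => hx.1.2⟩

lemma le_sSup_sublevel_iff (hf : MonotoneOn f (Icc a b)) (hfc : ContinuousOn f (Icc a b))
    (ha : f a ≤ r) (hx : x ∈ Icc a b) : x ≤ sSup {x ∈ Icc a b | f x ≤ r} ↔ f x ≤ r := by
  obtain ⟨hc, hfc⟩ := sSup_sublevel_mem (hx.1.trans hx.2) hfc ha
  exact ⟨fun h => (hf hx hc h).trans hfc, fun h => le_csSup ⟨b, fun _ hy => hy.1.2⟩ ⟨hx, h⟩⟩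

end sublevel

/-- The level reached from `p` at rate `r`: the solution `q ∈ [p, 1]` of `r_{g,h}(p, q) = r`,
or `1` when that rate is out of reach. -/
noncomputable def nextLevel (g h p r : ℝ) : ℝ :=
  sSup {q ∈ Icc p 1 | pairRate g h p q ≤ r}

section nextLevel
variable {g h p q r : ℝ}

lemma continuousOn_pairRate_right (hg : 0 < g) (hh : 0 < h) (hp : 0 < p) :
    ContinuousOn (pairRate g h p) (Icc p 1) := fun _ hq =>
  ((continuousAt_pairRate hg hh hp (hp.trans_le hq.1) (hq.1.trans hq.2) hq.2).comp
    (Continuous.prodMk_right p).continuousAt).continuousWithinAt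

lemma nextLevel_mem (hg : 0 < g) (hh : 0 < h) (hp : p ∈ Ioc 0 1) (hr : 0 ≤ r) :
    nextLevel g h p r ∈ Icc p 1 :=
  (sSup_sublevel_mem hp.2 (continuousOn_pairRate_right hg hh hp.1)
    (by rwa [pairRate_self hg hh hp.1.le hp.2])).1

lemma le_nextLevel_iff (hg : 0 < g) (hh : 0 < h) (hp : p ∈ Ioc 0 1) (hr : 0 ≤ r)
    (hq : q ∈ Icc p 1) : q ≤ nextLevel g h p r ↔ pairRate g h p q ≤ r :=
  le_sSup_sublevel_iff (pairRate_strictMonoOn_right hg hh hp.1).monotoneOn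
    (continuousOn_pairRate_right hg hh hp.1) (by rwa [pairRate_self hg hh hp.1.le hp.2]) hq

lemma nextLevel_lt (hg : 0 < g) (hh : 0 < h) (hp : p ∈ Ioc 0 1) (hr : 0 ≤ r)
    (hq : q ∈ Icc p 1) (hrq : r < pairRate g h p q) : nextLevel g h p r < q :=
  not_le.1 fun hle => ((le_nextLevel_iff hg hh hp hr hq).1 hle).not_gt hrq

lemma lt_nextLevel (hg : 0 < g) (hh : 0 < h) (hp : p ∈ Ioc 0 1) (hr : 0 ≤ r)
    (hq : q ∈ Ico p 1) (hrq : pairRate g h p q < r) : q < nextLevel g h p r := by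
  by_contra! hle
  have habove : ∀ q' ∈ Ioo q 1, r ≤ pairRate g h p q' := fun q' hq' =>
    not_lt.1 fun h' => (hle.trans_lt hq'.1).not_ge
      ((le_nextLevel_iff hg hh hp hr ⟨hq.1.trans hq'.1.le, hq'.2.le⟩).2 h'.le)
  have hcont : Tendsto (pairRate g h p) (𝓝[>] q) (𝓝 (pairRate g h p q)) :=
    ((continuousAt_pairRate hg hh hp.1 (hp.1.trans_le hq.1) hp.2 hq.2.le).comp
      (Continuous.prodMk_right p).continuousAt).tendsto.mono_left nhdsWithin_le_nhds
  exact hrq.not_ge (ge_of_tendsto hcont (eventually_of_mem (Ioo_mem_nhdsGT hq.2) habove))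

lemma pairRate_nextLevel (hg : 0 < g) (hh : 0 < h) (hp : p ∈ Ioc 0 1) (hr : 0 ≤ r)
    (h1 : nextLevel g h p r < 1) : pairRate g h p (nextLevel g h p r) = r := by
  have hmem := nextLevel_mem hg hh hp hr
  refine le_antisymm ((le_nextLevel_iff hg hh hp hr hmem).1 le_rfl) (not_lt.1 fun hlt => ?_)
  exact (lt_nextLevel hg hh hp hr ⟨hmem.1, h1⟩ hlt).false

section
variable {l : Filter (ℝ × ℝ)} {p₀ r₀ : ℝ}

lemma eventually_lt_nextLevel (hg : 0 < g) (hh : 0 < h) (hp₀ : p₀ ∈ Ioc 0 1) (hr₀ : 0 ≤ r₀)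
    (hfst : Tendsto Prod.fst l (𝓝 p₀)) (hsnd : Tendsto Prod.snd l (𝓝 r₀))
    (hl : ∀ᶠ z in l, z ∈ Ioc 0 1 ×ˢ Ici 0) {a : ℝ} (ha : a < nextLevel g h p₀ r₀) :
    ∀ᶠ z in l, a < nextLevel g h z.1 z.2 := by
  have hQ₀ := nextLevel_mem hg hh hp₀ hr₀
  rcases lt_or_ge a p₀ with hap | hpa
  · filter_upwards [hfst.eventually_const_lt hap, hl] with z hz hzS
    exact hz.trans_le (nextLevel_mem hg hh hzS.1 hzS.2).1
  obtain ⟨a', haa', ha'Q⟩ := exists_between ha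
  have hp₀a' : p₀ < a' := hpa.trans_lt haa'
  have ha'1 : a' < 1 := ha'Q.trans_le hQ₀.2
  have hlt : pairRate g h p₀ a' - r₀ < 0 := by
    have h1 := pairRate_strictMonoOn_right hg hh hp₀.1 ⟨hp₀a'.le, ha'1.le⟩ hQ₀ ha'Q
    have h2 := (le_nextLevel_iff hg hh hp₀ hr₀ hQ₀).1 le_rfl
    linarith
  have hrate : Tendsto (fun z : ℝ × ℝ => pairRate g h z.1 a' - z.2) l
      (𝓝 (pairRate g h p₀ a' - r₀)) :=
    ((continuousAt_pairRate hg hh hp₀.1 (hp₀.1.trans hp₀a') hp₀.2 ha'1.le).tendsto.comp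
      (hfst.prodMk_nhds tendsto_const_nhds)).sub hsnd
  filter_upwards [hfst.eventually_lt_const hp₀a', hrate.eventually_lt_const hlt, hl]
    with z hz hza' hzS
  exact haa'.trans (lt_nextLevel hg hh hzS.1 hzS.2 ⟨hz.le, ha'1⟩ (by linarith))

lemma eventually_nextLevel_lt (hg : 0 < g) (hh : 0 < h) (hp₀ : p₀ ∈ Ioc 0 1) (hr₀ : 0 ≤ r₀)
    (hfst : Tendsto Prod.fst l (𝓝 p₀)) (hsnd : Tendsto Prod.snd l (𝓝 r₀))
    (hl : ∀ᶠ z in l, z ∈ Ioc 0 1 ×ˢ Ici 0) {b : ℝ} (hb : nextLevel g h p₀ r₀ < b) :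
    ∀ᶠ z in l, nextLevel g h z.1 z.2 < b := by
  have hQ₀ := nextLevel_mem hg hh hp₀ hr₀
  rcases hQ₀.2.eq_or_lt with hQ1 | hQ1
  · filter_upwards [hl] with z hzS
    exact (nextLevel_mem hg hh hzS.1 hzS.2).2.trans_lt (hQ1 ▸ hb)
  obtain ⟨b', hQb', hb'⟩ := exists_between (lt_min hb hQ1)
  have hp₀b' : p₀ < b' := hQ₀.1.trans_lt hQb'
  have hb'1 : b' ≤ 1 := (hb'.trans_le (min_le_right _ _)).le
  have hgt : 0 < pairRate g h p₀ b' - r₀ := by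
    have := pairRate_strictMonoOn_right hg hh hp₀.1 hQ₀ ⟨hp₀b'.le, hb'1⟩ hQb'
    rw [pairRate_nextLevel hg hh hp₀ hr₀ hQ1] at this
    linarith
  have hrate : Tendsto (fun z : ℝ × ℝ => pairRate g h z.1 b' - z.2) l
      (𝓝 (pairRate g h p₀ b' - r₀)) :=
    ((continuousAt_pairRate hg hh hp₀.1 (hp₀.1.trans hp₀b') hp₀.2 hb'1).tendsto.comp
      (hfst.prodMk_nhds tendsto_const_nhds)).sub hsnd
  filter_upwards [hfst.eventually_lt_const hp₀b', hrate.eventually_const_lt hgt, hl]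
    with z hz hzb' hzS
  exact (nextLevel_lt hg hh hzS.1 hzS.2 ⟨hz.le, hb'1⟩ (by linarith)).trans
    (hb'.trans_le (min_le_left _ _))

end

lemma continuousOn_nextLevel (hg : 0 < g) (hh : 0 < h) :
    ContinuousOn (fun z : ℝ × ℝ => nextLevel g h z.1 z.2) (Ioc 0 1 ×ˢ Ici 0) := by
  rintro ⟨p₀, r₀⟩ ⟨hp₀, hr₀⟩
  have hl : 𝓝[Ioc 0 1 ×ˢ Ici 0] (p₀, r₀) ≤ 𝓝 (p₀, r₀) := nhdsWithin_le_nhds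
  have hfst := (continuous_fst.tendsto (p₀, r₀)).mono_left hl
  have hsnd := (continuous_snd.tendsto (p₀, r₀)).mono_left hl
  exact tendsto_order.2
    ⟨fun _ => eventually_lt_nextLevel hg hh hp₀ hr₀ hfst hsnd self_mem_nhdsWithin,
      fun _ => eventually_nextLevel_lt hg hh hp₀ hr₀ hfst hsnd self_mem_nhdsWithin⟩

end nextLevel

noncomputable def forwardLevel (g : ℕ → ℝ) (r : ℝ) : ℕ → ℝ
  | 0 => 0
  | 1 => 1 - exp (-r / g 1)
  | n + 2 => nextLevel (g (n + 1)) (g (n + 2)) (forwardLevel g r (n + 1)) r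

section forwardLevel
variable {g : ℕ → ℝ} {r : ℝ} {N n : ℕ}

lemma forwardLevel_succ (hn : 1 ≤ n) :
    forwardLevel g r (n + 1) = nextLevel (g n) (g (n + 1)) (forwardLevel g r n) r := by
  obtain ⟨m, rfl⟩ := Nat.exists_eq_add_of_le' hn
  rfl

lemma forwardLevel_mem (hg : ∀ i, 1 ≤ i → i ≤ N → 0 < g i) (hr : 0 < r) :
    ∀ i, 1 ≤ i → i ≤ N → forwardLevel g r i ∈ Ioc 0 1 := by
  intro i hi
  induction i, hi using Nat.le_induction with
  | base =>
    intro hN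
    have := exp_lt_one_iff.2 (div_neg_of_neg_of_pos (neg_neg_of_pos hr) (hg 1 le_rfl hN))
    exact ⟨sub_pos.2 this, sub_le_self _ (exp_pos _).le⟩
  | succ n hn ih =>
    intro hnN
    have hp := ih (by omega)
    have := nextLevel_mem (hg n hn (by omega)) (hg (n + 1) (by omega) hnN) hp hr.le
    rw [forwardLevel_succ hn]
    exact ⟨hp.1.trans_le this.1, this.2⟩

lemma forwardLevel_monotoneOn (hg : ∀ i, 1 ≤ i → i ≤ N → 0 < g i) (hr : 0 < r) :
    MonotoneOn (forwardLevel g r) (Iic N) := by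
  refine monotoneOn_of_le_succ ordConnected_Iic fun n _ _ hn1 => ?_
  have hn1 : n + 1 ≤ N := hn1
  rcases Nat.eq_zero_or_pos n with rfl | hn
  · exact (forwardLevel_mem hg hr 1 le_rfl hn1).1.le
  · show forwardLevel g r n ≤ forwardLevel g r (n + 1)
    rw [forwardLevel_succ hn]
    exact (nextLevel_mem (hg n hn (by omega)) (hg (n + 1) (by omega) hn1)
      (forwardLevel_mem hg hr n hn (by omega)) hr.le).1

lemma pairRate_forwardLevel (hg : ∀ i, 1 ≤ i → i ≤ N → 0 < g i) (hr : 0 < r) (hn : 1 ≤ n)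
    (hnN : n + 1 ≤ N) (h1 : forwardLevel g r (n + 1) < 1) :
    pairRate (g n) (g (n + 1)) (forwardLevel g r n) (forwardLevel g r (n + 1)) = r := by
  rw [forwardLevel_succ hn] at h1 ⊢
  exact pairRate_nextLevel (hg n hn (by omega)) (hg (n + 1) (by omega) hnN)
    (forwardLevel_mem hg hr n hn (by omega)) hr.le h1

lemma continuousOn_forwardLevel (hg : ∀ i, 1 ≤ i → i ≤ N → 0 < g i) :
    ∀ i, 1 ≤ i → i ≤ N → ContinuousOn (fun r => forwardLevel g r i) (Ioi 0) := by
  intro i hi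
  induction i, hi using Nat.le_induction with
  | base =>
    intro _
    simp only [forwardLevel]
    fun_prop
  | succ n hn ih =>
    intro hnN
    simp only [forwardLevel_succ hn]
    refine (continuousOn_nextLevel (hg n hn (by omega)) (hg (n + 1) (by omega) hnN)).comp
      ((ih (by omega)).prodMk continuousOn_id) fun r hr =>
        ⟨forwardLevel_mem hg hr n hn (by omega), mem_Ici.2 (le_of_lt hr)⟩

lemma tendsto_forwardLevel_zero (hg : ∀ i, 1 ≤ i → i ≤ N → 0 < g i) :
    ∀ i, 1 ≤ i → i ≤ N → Tendsto (fun r => forwardLevel g r i) (𝓝[>] 0) (𝓝 0) := by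
  intro i hi
  induction i, hi using Nat.le_induction with
  | base =>
    intro _
    have : Continuous fun r => 1 - exp (-r / g 1) := by fun_prop
    simpa [forwardLevel] using (this.tendsto 0).mono_left nhdsWithin_le_nhds
  | succ n hn ih =>
    intro hnN
    have hgn := hg n hn (by omega)
    have hgn1 := hg (n + 1) (by omega) hnN
    have hpos : ∀ᶠ r in 𝓝[>] (0 : ℝ), 0 < r := self_mem_nhdsWithin
    refine tendsto_order.2 ⟨fun a ha => ?_, fun b hb => ?_⟩
    · filter_upwards [hpos] with r hr
      exact ha.trans (forwardLevel_mem hg hr (n + 1) (by omega) hnN).1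
    -- below level `ε / 2` the next level stays below `ε`, for all small rates
    set ε := min b (1 / 2)
    have hε : 0 < ε := lt_min hb (by norm_num)
    have hε1 : ε < 1 := (min_le_right _ _).trans_lt (by norm_num)
    have hrate := pairRate_pos hgn hgn1 (half_pos hε) (half_lt_self hε) hε1.le
    filter_upwards [hpos, (ih (by omega)).eventually_lt_const (half_pos hε),
      (nhdsWithin_le_nhds (eventually_lt_nhds hrate))] with r hr hlow hsmall
    have hp := forwardLevel_mem hg hr n hn (by omega)
    rw [forwardLevel_succ hn]
    refine (nextLevel_lt hgn hgn1 hp hr.le ⟨by linarith, hε1.le⟩ ?_).trans_le (min_le_left _ _)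
    exact hsmall.trans_le ((pairRate_strictAntiOn_left hgn hgn1 hε1).antitoneOn
      ⟨hp.1.le, by linarith⟩ ⟨(half_pos hε).le, by linarith⟩ hlow.le)

end forwardLevel

section rates
variable {M : ℕ} {g t : ℕ → ℝ}

lemma rateAt_one : rateAt M g t 1 = -g 1 * log (1 - t 1) := if_pos rfl

lemma rateAt_last (hM : 3 ≤ M) : rateAt M g t (M - 1) = -g (M - 2) * log (t (M - 2)) := by
  rw [rateAt, if_neg (by omega), if_pos rfl]

lemma rateAt_of_two_le (hM : 3 ≤ M) {i : ℕ} (h2 : 2 ≤ i) (hi : i ≤ M - 2) :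
    rateAt M g t i = pairRate (g (i - 1)) (g i) (t (i - 1)) (t i) := by
  rw [rateAt, if_neg (by omega), if_neg (by omega)]

lemma minRate_le_rateAt {i : ℕ} (h1 : 1 ≤ i) (h2 : i ≤ M - 1) :
    minRate M g t ≤ rateAt M g t i := by
  refine csInf_le (Set.Finite.bddBelow ?_) ⟨i, h1, h2, rfl⟩
  refine ((finite_Iic (M - 1)).image (rateAt M g t)).subset ?_
  rintro _ ⟨j, -, hj, rfl⟩
  exact ⟨j, hj, rfl⟩

lemma le_minRate_iff (hM : 2 ≤ M) {c : ℝ} :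
    c ≤ minRate M g t ↔ ∀ i, 1 ≤ i → i ≤ M - 1 → c ≤ rateAt M g t i := by
  refine ⟨fun h i h1 h2 => h.trans (minRate_le_rateAt h1 h2), fun h => ?_⟩
  refine le_csInf ⟨_, 1, le_rfl, by omega, rfl⟩ ?_
  rintro _ ⟨i, h1, h2, rfl⟩
  exact h i h1 h2

end rates

section existence
variable {g : ℕ → ℝ} {N : ℕ}

lemma exists_lt_lastRate_forwardLevel (hN : 1 ≤ N) (hg : ∀ i, 1 ≤ i → i ≤ N → 0 < g i) :
    ∃ r > 0, r < -g N * log (forwardLevel g r N) := by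
  have hpos : ∀ᶠ r in 𝓝[>] (0 : ℝ), 0 < r := self_mem_nhdsWithin
  obtain ⟨r, hr, hsmall, hr1⟩ := (hpos.and
    (((tendsto_forwardLevel_zero hg N hN le_rfl).eventually_lt_const (exp_pos (-1 / g N))).and
      (nhdsWithin_le_nhds (eventually_lt_nhds one_pos)))).exists
  refine ⟨r, hr, ?_⟩
  have := log_lt_log (forwardLevel_mem hg hr N hN le_rfl).1 hsmall
  rw [log_exp, lt_div_iff₀ (hg N hN le_rfl)] at this
  linarith

lemma exists_lastRate_forwardLevel_lt (hN : 1 ≤ N) (hg : ∀ i, 1 ≤ i → i ≤ N → 0 < g i) :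
    ∃ r > 0, -g N * log (forwardLevel g r N) < r := by
  have hg1 := hg 1 le_rfl hN
  have hgN := hg N hN le_rfl
  have hlog2 := log_pos (by norm_num : (1 : ℝ) < 2)
  -- at this rate already `t₁ ≥ 1/2`, so the last rate is at most `g N * log 2`
  set r := (g 1 + g N) * log 2
  have hr : 0 < r := by positivity
  have hhalf : 1 / 2 ≤ forwardLevel g r 1 := by
    have : exp (-r / g 1) ≤ 1 / 2 := by
      rw [← exp_log (by norm_num : (0 : ℝ) < 1 / 2), exp_le_exp, div_le_iff₀ hg1, one_div,
        log_inv]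
      nlinarith [mul_pos hgN hlog2]
    simp only [forwardLevel]
    linarith
  have hmono := forwardLevel_monotoneOn hg hr (mem_Iic.2 hN) (mem_Iic.2 le_rfl) hN
  have := log_le_log (by norm_num) (hhalf.trans hmono)
  rw [one_div, log_inv] at this
  exact ⟨r, hr, by nlinarith [mul_pos hg1 hlog2]⟩

lemma exists_forwardLevel_lastRate_eq (hN : 1 ≤ N) (hg : ∀ i, 1 ≤ i → i ≤ N → 0 < g i) :
    ∃ r > 0, forwardLevel g r N < 1 ∧ -g N * log (forwardLevel g r N) = r := by
  set E : ℝ → ℝ := fun r => -g N * log (forwardLevel g r N) - r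
  have hE : ContinuousOn E (Ioi 0) :=
    (continuousOn_const.mul ((continuousOn_forwardLevel hg N hN le_rfl).log fun r hr =>
      (forwardLevel_mem hg hr N hN le_rfl).1.ne')).sub continuousOn_id
  obtain ⟨r₁, hr₁, hE₁⟩ := exists_lt_lastRate_forwardLevel hN hg
  obtain ⟨r₂, hr₂, hE₂⟩ := exists_lastRate_forwardLevel_lt hN hg
  have hsub : uIcc r₁ r₂ ⊆ Ioi 0 := fun r hr => (lt_min hr₁ hr₂).trans_le hr.1
  obtain ⟨r, hr, hEr⟩ := intermediate_value_uIcc (hE.mono hsub)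
    ⟨min_le_of_right_le (sub_neg.2 hE₂).le, le_max_of_le_left (sub_pos.2 hE₁).le⟩
  have hr0 : 0 < r := hsub hr
  refine ⟨r, hr0, (forwardLevel_mem hg hr0 N hN le_rfl).2.lt_of_ne fun h1 => ?_, by
    simp only [E] at hEr; linarith⟩
  simp only [E, h1, log_one, mul_zero, zero_sub, neg_eq_zero] at hEr
  exact hr0.ne' hEr

lemma forwardLevel_lt_succ {r : ℝ} (hg : ∀ i, 1 ≤ i → i ≤ N → 0 < g i) (hr : 0 < r)
    (hN : forwardLevel g r N < 1) {n : ℕ} (hn : n < N) :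
    forwardLevel g r n < forwardLevel g r (n + 1) := by
  rcases Nat.eq_zero_or_pos n with rfl | hn0
  · exact (forwardLevel_mem hg hr 1 le_rfl hn).1
  have hmono := forwardLevel_monotoneOn hg hr
  have h1 : forwardLevel g r (n + 1) < 1 := (hmono (mem_Iic.2 hn) (mem_Iic.2 le_rfl) hn).trans_lt hN
  refine (hmono (mem_Iic.2 (by omega)) (mem_Iic.2 hn) (by omega)).lt_of_ne fun heq => ?_
  have := pairRate_forwardLevel hg hr hn0 hn h1
  rw [← heq, pairRate_self (hg n hn0 (by omega)) (hg (n + 1) (by omega) hn)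
    (forwardLevel_mem hg hr n hn0 (by omega)).1.le (forwardLevel_mem hg hr n hn0 (by omega)).2]
    at this
  exact hr.ne this

theorem exists_isEqualizedWithRate {M : ℕ} (hM : 3 ≤ M) (hg : ∀ i, 1 ≤ i → i ≤ M - 2 → 0 < g i) :
    ∃ s r, IsEqualizedWithRate M g s r := by
  obtain ⟨r, hr, hlt, hlast⟩ := exists_forwardLevel_lastRate_eq (N := M - 2) (by omega) hg
  refine ⟨fun i => if i ≤ M - 2 then forwardLevel g r i else 1, r, by simp [forwardLevel],
    if_neg (by omega), fun i hi => ?_, fun i h1 h2 => ?_⟩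
  · rcases Nat.lt_or_ge i (M - 2) with hi' | hi'
    · simp only [if_pos hi'.le, if_pos (show i + 1 ≤ M - 2 by omega)]
      exact forwardLevel_lt_succ hg hr hlt hi'
    · simp only [if_pos (show i ≤ M - 2 by omega), if_neg (show ¬i + 1 ≤ M - 2 by omega)]
      rwa [show i = M - 2 by omega]
  rcases eq_or_lt_of_le h1 with rfl | h1
  · simp only [rateAt_one, if_pos (show 1 ≤ M - 2 by omega), forwardLevel, sub_sub_cancel,
      log_exp]
    field_simp [(hg 1 le_rfl (by omega)).ne']
  rcases eq_or_lt_of_le h2 with rfl | h2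
  · simp only [rateAt_last hM, if_pos le_rfl]
    exact hlast
  rw [rateAt_of_two_le hM h1 (by omega), if_pos (by omega), if_pos (by omega)]
  obtain ⟨n, rfl⟩ : ∃ n, i = n + 1 := ⟨i - 1, by omega⟩
  have hn : n + 1 ≤ M - 2 := by omega
  have hmono := forwardLevel_monotoneOn hg hr (mem_Iic.2 hn) (mem_Iic.2 le_rfl) hn
  exact pairRate_forwardLevel hg hr (by omega) hn (hmono.trans_lt hlt)

end existence

namespace IsEqualizedWithRate
variable {M : ℕ} {g s t : ℕ → ℝ} {r : ℝ}

lemma rateAt_eq (hs : IsEqualizedWithRate M g s r) (i : ℕ) (h1 : 1 ≤ i) (h2 : i ≤ M - 1) :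
    rateAt M g s i = r :=
  hs.2.2.2 i h1 h2

lemma le_succ (hs : IsEqualizedWithRate M g s r) : ∀ i, i < M - 1 → s i ≤ s (i + 1) :=
  fun i hi => (hs.2.2.1 i hi).le

lemma mem_Ioo (hs : IsEqualizedWithRate M g s r) {i : ℕ} (h1 : 1 ≤ i) (h2 : i ≤ M - 2) :
    s i ∈ Ioo 0 1 := by
  have hmono : StrictMonoOn s (Iic (M - 1)) := strictMonoOn_Iic_of_lt_succ hs.2.2.1
  rw [← hs.1, ← hs.2.1]
  exact ⟨hmono (mem_Iic.2 (Nat.zero_le _)) (mem_Iic.2 (by omega)) (by omega),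
    hmono (mem_Iic.2 (by omega)) (mem_Iic.2 le_rfl) (by omega)⟩

lemma minRate_eq (hM : 2 ≤ M) (hs : IsEqualizedWithRate M g s r) : minRate M g s = r :=
  le_antisymm (hs.rateAt_eq 1 le_rfl (by omega) ▸ minRate_le_rateAt le_rfl (by omega))
    ((le_minRate_iff hM).2 fun i h1 h2 => (hs.rateAt_eq i h1 h2).ge)

lemma le_of_le_rateAt (hM : 3 ≤ M) (hg : ∀ i, 1 ≤ i → i ≤ M - 2 → 0 < g i)
    (hs : IsEqualizedWithRate M g s r) (ht : ∀ i, i < M - 1 → t i ≤ t (i + 1))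
    (hrt : ∀ i, 1 ≤ i → i ≤ M - 2 → r ≤ rateAt M g t i) :
    ∀ i, 1 ≤ i → i ≤ M - 2 → s i ≤ t i := by
  intro i hi
  induction i, hi using Nat.le_induction with
  | base =>
    intro hM2
    have hs1 := hs.mem_Ioo le_rfl hM2
    have hrate := hrt 1 le_rfl hM2
    rw [← hs.rateAt_eq 1 le_rfl (by omega), rateAt_one, rateAt_one] at hrate
    by_contra! hlt
    have := log_lt_log (by linarith [hs1.2]) (by linarith : 1 - s 1 < 1 - t 1)
    nlinarith [hg 1 le_rfl hM2]
  | succ n hn ih =>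
    intro hnM
    have hrate := hrt (n + 1) (by omega) hnM
    rw [← hs.rateAt_eq (n + 1) (by omega) (by omega), rateAt_of_two_le hM (by omega) hnM,
      rateAt_of_two_le hM (by omega) hnM, Nat.add_sub_cancel] at hrate
    by_contra! hlt
    exact hrate.not_gt <| pairRate_lt_pairRate (hg n hn (by omega)) (hg (n + 1) (by omega) hnM)
      (hs.mem_Ioo hn (by omega)).1 (ih (by omega)) (ht n (by omega)) hlt.le
      (hlt.trans (hs.mem_Ioo (by omega) hnM).2) (hs.mem_Ioo (by omega) hnM).2.le (Or.inr hlt)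

lemma eq_of_le_minRate (hM : 3 ≤ M) (hg : ∀ i, 1 ≤ i → i ≤ M - 2 → 0 < g i)
    (hs : IsEqualizedWithRate M g s r) (ht0 : t 0 = 0) (ht1 : t (M - 1) = 1)
    (ht : ∀ i, i < M - 1 → t i ≤ t (i + 1)) (hrt : r ≤ minRate M g t) :
    ∀ i, i < M → t i = s i := by
  have hrates := (le_minRate_iff (by omega)).1 hrt
  have hfwd := hs.le_of_le_rateAt hM hg ht fun i h1 h2 => hrates i h1 (by omega)
  have hsN := hs.mem_Ioo (M := M) (i := M - 2) (by omega) le_rfl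
  have htop : t (M - 2) ≤ s (M - 2) := by
    have hrate := hrates (M - 1) (by omega) le_rfl
    rw [← hs.rateAt_eq (M - 1) (by omega) le_rfl, rateAt_last hM, rateAt_last hM] at hrate
    by_contra! hlt
    have := log_lt_log hsN.1 hlt
    nlinarith [hg (M - 2) (by omega) le_rfl]
  have hbwd : ∀ i, i ≤ M - 2 → 1 ≤ i → t i ≤ s i := by
    intro i hi
    induction hi using Nat.decreasingInduction with
    | self => exact fun _ => htop
    | of_succ n hn ih =>
      intro hn1
      have hrate := hrates (n + 1) (by omega) (by omega)
      have hn2 : n + 1 ≤ M - 2 := hn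
      rw [← hs.rateAt_eq (n + 1) (by omega) (by omega), rateAt_of_two_le hM (by omega) hn2,
        rateAt_of_two_le hM (by omega) hn2, Nat.add_sub_cancel] at hrate
      by_contra! hlt
      have hs1 := hs.mem_Ioo (by omega) hn2
      exact hrate.not_gt <| pairRate_lt_pairRate (hg n hn1 (by omega)) (hg (n + 1) (by omega) hn2)
        (hs.mem_Ioo hn1 (by omega)).1 hlt.le (ht n (by omega)) (ih (by omega))
        ((ih (by omega)).trans_lt hs1.2) hs1.2.le (Or.inl hlt)
  intro i hi
  rcases Nat.eq_zero_or_pos i with rfl | hi0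
  · rw [ht0, hs.1]
  rcases eq_or_lt_of_le (Nat.le_sub_one_of_lt hi) with rfl | hi'
  · rw [ht1, hs.2.1]
  exact le_antisymm (hbwd i (by omega) hi0) (hfwd i hi0 (by omega))

lemma minRate_le (hM : 3 ≤ M) (hg : ∀ i, 1 ≤ i → i ≤ M - 2 → 0 < g i)
    (hs : IsEqualizedWithRate M g s r) (ht0 : t 0 = 0) (ht1 : t (M - 1) = 1)
    (ht : ∀ i, i < M - 1 → t i ≤ t (i + 1)) : minRate M g t ≤ r := by
  by_contra! hlt
  have heq := hs.eq_of_le_minRate hM hg ht0 ht1 ht hlt.le (M - 2) (by omega)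
  have := minRate_le_rateAt (g := g) (t := t) (M := M) (by omega : 1 ≤ M - 1) le_rfl
  rw [rateAt_last hM, heq, ← rateAt_last hM, hs.rateAt_eq (M - 1) (by omega) le_rfl] at this
  exact this.not_gt hlt

end IsEqualizedWithRate

/-- **Existence, uniqueness, and maximin optimality of the equalized solution.**
For `M ≥ 3` and positive weights `g₁,…,g_{M-2}` there is a unique equalized solution `t*`,
it maximizes `R(t) = min` of the `M-1` rates over all monotone vectors with `t₀ = 0`,
`t_{M-1} = 1`, and any maximizer of `R` over this set equals `t*`. -/
theorem equalized_unique_and_maximin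
    (M : ℕ) (hM : 3 ≤ M) (g : ℕ → ℝ)
    (hg : ∀ i, 1 ≤ i → i ≤ M - 2 → 0 < g i) :
    ∃ tstar : ℕ → ℝ,
      IsEqualizedSol M g tstar ∧
      (∀ t : ℕ → ℝ, IsEqualizedSol M g t → ∀ i, i < M → t i = tstar i) ∧
      (∀ t : ℕ → ℝ, t 0 = 0 → t (M - 1) = 1 → (∀ i, i < M - 1 → t i ≤ t (i + 1)) →
        minRate M g t ≤ minRate M g tstar) ∧
      (∀ t : ℕ → ℝ, t 0 = 0 → t (M - 1) = 1 → (∀ i, i < M - 1 → t i ≤ t (i + 1)) →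
        minRate M g t = minRate M g tstar → ∀ i, i < M → t i = tstar i) := by
  obtain ⟨s, r, hs⟩ := exists_isEqualizedWithRate hM hg
  have hsr : minRate M g s = r := hs.minRate_eq (by omega)
  refine ⟨s, ⟨r, hs⟩, fun t ⟨r', ht⟩ => ?_, fun t ht0 ht1 ht => ?_, fun t ht0 ht1 ht heq => ?_⟩
  · -- an equalized `t` is optimal as well, so it ties with `s`
    have hrr' : r ≤ minRate M g t := by
      rw [ht.minRate_eq (by omega), ← hsr]
      exact ht.minRate_le hM hg hs.1 hs.2.1 hs.le_succ
    exact hs.eq_of_le_minRate hM hg ht.1 ht.2.1 ht.le_succ hrr'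
  · exact hsr ▸ hs.minRate_le hM hg ht0 ht1 ht
  · exact hs.eq_of_le_minRate hM hg ht0 ht1 ht (hsr ▸ heq.ge)
end

section
/- Let M ≥ 3 and let t^M = (t_0,…,t_{M−1}) be the equalized solution with uniform weights (all weights equal to 1). Define t' = (t'_0,…,t'_{2M−2}) by: t'_{2i} = t_i for all i ∈ {0,…,M−1}; t'_1 = (1 − √(1 − t_1))/2; t'_{2M−3} = (1 + √(t_{M−2}))/2; and for each odd k with 3 ≤ k ≤ 2M−5, t'_k = c/(1+c) where c = [ (√(1−t'_{k+1}) − √(1−t'_{k−1})) / (√(t'_{k−1}) − √(t'_{k+1})) ]². Then t' is the equalized solution with uniform weights and 2M−1 levels, i.e. t' = t^{2M−1}. -/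
/-!
Write a level as `p = sin² θ` with `θ ∈ [0, π/2]`. The Bhattacharyya coefficient
`√((1-p)(1-q)) + √(pq)` of two levels is then `cos (θ_q - θ_p)`, and with uniform weights every
rate is `-2 log` of such a coefficient, the two end rates being those against the levels `0` and
`1`. Equal rates therefore force equally spaced angles, so the equalized solution is
`t^N_k = sin² (k π / (2(N-1)))`. In these coordinates `t'_{2i} = t_i` keeps the angles of `t^M`,
and the recipe for odd `k` (at the two ends, a half-angle formula) places the angle of `t'_k` at
the midpoint of its neighbours: `t'` is the closed form with `2M - 1` levels.
-/

open Real Set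

noncomputable def bhattacharyya (p q : ℝ) : ℝ := √((1 - p) * (1 - q)) + √(p * q)

noncomputable def bisectLevel (a b : ℝ) : ℝ :=
  ((√(1 - b) - √(1 - a)) / (√a - √b)) ^ 2 / (1 + ((√(1 - b) - √(1 - a)) / (√a - √b)) ^ 2)

noncomputable def equalizedAngle (N : ℕ) : ℝ := π / (2 * (N - 1 : ℕ))

noncomputable def equalizedLevel (N k : ℕ) : ℝ := sin (k * equalizedAngle N) ^ 2

lemma pairRate_one_one {p : ℝ} (hp₀ : 0 ≤ p) (hp₁ : p ≤ 1) (q : ℝ) :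
    pairRate 1 1 p q = -2 * log (bhattacharyya p q) := by
  rw [pairRate, bhattacharyya, sqrt_mul (sub_nonneg.2 hp₁), sqrt_mul hp₀]
  norm_num [sqrt_eq_rpow]

lemma rateAt_one_eq {N : ℕ} {t : ℕ → ℝ} (h0 : t 0 = 0) (h1 : t (N - 1) = 1)
    (hbd : ∀ k ≤ N - 1, t k ∈ Icc 0 1) {i : ℕ} (hi₁ : 1 ≤ i) (hi₂ : i ≤ N - 1) :
    rateAt N (fun _ => 1) t i = -2 * log (bhattacharyya (t (i - 1)) (t i)) := by
  rw [rateAt]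
  split_ifs with h h'
  · subst h
    rw [Nat.sub_self, h0, bhattacharyya, zero_mul, sqrt_zero, add_zero, sub_zero, one_mul,
      log_sqrt (sub_nonneg.2 (hbd 1 hi₂).2)]
    ring
  · subst h'
    rw [show N - 1 - 1 = N - 2 by omega, h1, bhattacharyya, sub_self, mul_zero, sqrt_zero,
      zero_add, mul_one, log_sqrt (hbd (N - 2) (by omega)).1]
    ring
  · exact pairRate_one_one (hbd _ (by omega)).1 (hbd _ (by omega)).2 _

lemma bhattacharyya_sin_sq {x y : ℝ} (hx : x ∈ Icc 0 (π / 2)) (hy : y ∈ Icc 0 (π / 2)) :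
    bhattacharyya (sin x ^ 2) (sin y ^ 2) = cos (y - x) := by
  have hcos : ∀ z ∈ Icc 0 (π / 2), 0 ≤ cos z := fun z hz =>
    cos_nonneg_of_mem_Icc ⟨by linarith [hz.1, pi_pos], hz.2⟩
  have hsin : ∀ z ∈ Icc 0 (π / 2), 0 ≤ sin z := fun z hz =>
    sin_nonneg_of_nonneg_of_le_pi hz.1 (by linarith [hz.2, pi_pos])
  rw [bhattacharyya, ← cos_sq', ← cos_sq', ← mul_pow, ← mul_pow,
    sqrt_sq (mul_nonneg (hcos x hx) (hcos y hy)), sqrt_sq (mul_nonneg (hsin x hx) (hsin y hy)),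
    cos_sub]
  ring

lemma rateAt_one_eq_of_sin_sq {N : ℕ} {t θ : ℕ → ℝ} (h0 : t 0 = 0) (h1 : t (N - 1) = 1)
    (hθ : ∀ k ≤ N - 1, θ k ∈ Icc 0 (π / 2)) (ht : ∀ k ≤ N - 1, t k = sin (θ k) ^ 2)
    {i : ℕ} (hi₁ : 1 ≤ i) (hi₂ : i ≤ N - 1) :
    rateAt N (fun _ => 1) t i = -2 * log (cos (θ i - θ (i - 1))) := by
  have hbd : ∀ k ≤ N - 1, t k ∈ Icc 0 1 := fun k hk =>
    ht k hk ▸ ⟨sq_nonneg _, sin_sq_le_one _⟩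
  rw [rateAt_one_eq h0 h1 hbd hi₁ hi₂, ht _ (by omega), ht i hi₂,
    bhattacharyya_sin_sq (hθ _ (by omega)) (hθ i hi₂)]

lemma equalizedAngle_pos {N : ℕ} (hN : 2 ≤ N) : 0 < equalizedAngle N := by
  have : (0 : ℝ) < (N - 1 : ℕ) := by exact_mod_cast (by omega : 0 < N - 1)
  exact div_pos pi_pos (by positivity)

lemma natCast_sub_one_mul_equalizedAngle {N : ℕ} (hN : 2 ≤ N) :
    ((N - 1 : ℕ) : ℝ) * equalizedAngle N = π / 2 := by
  have : ((N - 1 : ℕ) : ℝ) ≠ 0 := by exact_mod_cast (by omega : N - 1 ≠ 0)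
  rw [equalizedAngle]
  field_simp

lemma natCast_mul_equalizedAngle_mem_Icc {N k : ℕ} (hN : 2 ≤ N) (hk : k ≤ N - 1) :
    (k : ℝ) * equalizedAngle N ∈ Icc 0 (π / 2) := by
  have hε := equalizedAngle_pos hN
  refine ⟨by positivity, natCast_sub_one_mul_equalizedAngle hN ▸ ?_⟩
  gcongr

lemma equalizedAngle_eq_two_mul (M : ℕ) :
    equalizedAngle M = 2 * equalizedAngle (2 * M - 1) := by
  rw [equalizedAngle, equalizedAngle, show 2 * M - 1 - 1 = 2 * (M - 1) by omega]
  push_cast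
  rcases eq_or_ne ((M - 1 : ℕ) : ℝ) 0 with h | h
  · simp [h]
  · field_simp

theorem isEqualizedSol_of_eq_equalizedLevel {N : ℕ} (hN : 2 ≤ N) {t : ℕ → ℝ}
    (ht : ∀ k ≤ N - 1, t k = equalizedLevel N k) :
    IsEqualizedSol N (fun _ => 1) t := by
  have hε := equalizedAngle_pos hN
  have h0 : t 0 = 0 := by simp [ht 0 (Nat.zero_le _), equalizedLevel]
  have h1 : t (N - 1) = 1 := by
    rw [ht _ le_rfl, equalizedLevel, natCast_sub_one_mul_equalizedAngle hN, sin_pi_div_two, one_pow]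
  refine ⟨-2 * log (cos (equalizedAngle N)), h0, h1, fun i hi => ?_, fun i hi₁ hi₂ => ?_⟩
  · have hmem := natCast_mul_equalizedAngle_mem_Icc (k := i) hN hi.le
    have hmem' := natCast_mul_equalizedAngle_mem_Icc (k := i + 1) hN hi
    rw [ht i hi.le, ht (i + 1) hi, equalizedLevel, equalizedLevel]
    gcongr
    · exact sin_nonneg_of_nonneg_of_le_pi hmem.1 (by linarith [hmem.2, pi_pos])
    · refine strictMonoOn_sin ⟨by linarith [hmem.1, pi_pos], hmem.2⟩
        ⟨by linarith [hmem'.1, pi_pos], hmem'.2⟩ ?_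
      push_cast
      linarith
  · rw [rateAt_one_eq_of_sin_sq h0 h1 (fun k hk => natCast_mul_equalizedAngle_mem_Icc hN hk) ht
      hi₁ hi₂, Nat.cast_sub hi₁]
    ring_nf

lemma eq_natCast_mul_of_sub_eq {θ : ℕ → ℝ} {n : ℕ} {δ : ℝ} (h0 : θ 0 = 0)
    (hstep : ∀ i < n, θ (i + 1) - θ i = δ) : ∀ k ≤ n, θ k = k * δ := by
  intro k hk
  induction k with
  | zero => simp [h0]
  | succ k ih =>
    rw [Nat.cast_succ, add_one_mul, ← ih (by omega), ← hstep k hk]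
    ring

lemma sub_mem_Ioo_of_strictMonoOn {θ : ℕ → ℝ} {n : ℕ} (hn : 2 ≤ n)
    (hθ : StrictMonoOn θ (Iic n)) {i : ℕ} (hi : i < n) :
    θ (i + 1) - θ i ∈ Ioo 0 (θ n - θ 0) := by
  have hpos := hθ (mem_Iic.2 hi.le) (mem_Iic.2 hi) (Nat.lt_succ_self i)
  refine ⟨sub_pos.2 hpos, ?_⟩
  rcases Nat.eq_zero_or_pos i with rfl | hi₀
  · have := hθ (mem_Iic.2 (by omega)) (mem_Iic.2 le_rfl) (by omega : 1 < n)
    linarith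
  · have h₀ := hθ (mem_Iic.2 (Nat.zero_le n)) (mem_Iic.2 hi.le) hi₀
    have h₁ := hθ.monotoneOn (mem_Iic.2 hi) (mem_Iic.2 le_rfl) hi
    linarith

lemma eq_natCast_mul_equalizedAngle_of_rate_eq {N : ℕ} (hN : 3 ≤ N) {θ : ℕ → ℝ} {r : ℝ}
    (hθ : StrictMonoOn θ (Iic (N - 1))) (h0 : θ 0 = 0) (h1 : θ (N - 1) = π / 2)
    (hrate : ∀ i < N - 1, -2 * log (cos (θ (i + 1) - θ i)) = r) :
    ∀ k ≤ N - 1, θ k = k * equalizedAngle N := by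
  have hstep : ∀ i < N - 1, θ (i + 1) - θ i ∈ Ioo 0 (π / 2) := fun i hi => by
    simpa [h0, h1] using sub_mem_Ioo_of_strictMonoOn (by omega) hθ hi
  have hcos_pos : ∀ i < N - 1, 0 < cos (θ (i + 1) - θ i) := fun i hi =>
    cos_pos_of_mem_Ioo ⟨by linarith [(hstep i hi).1, pi_pos], (hstep i hi).2⟩
  have hconst : ∀ i < N - 1, θ (i + 1) - θ i = θ 1 - θ 0 := by
    intro i hi
    have h₀ : 0 < N - 1 := by omega
    have hIcc : ∀ j < N - 1, θ (j + 1) - θ j ∈ Icc 0 π := fun j hj =>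
      ⟨(hstep j hj).1.le, by linarith [(hstep j hj).2, pi_pos]⟩
    refine injOn_cos (hIcc i hi) (hIcc 0 h₀) ?_
    refine log_injOn_pos (hcos_pos i hi) (hcos_pos 0 h₀) ?_
    linarith [hrate i hi, hrate 0 h₀]
  have hprog := eq_natCast_mul_of_sub_eq h0 hconst
  have hθ1 : θ 1 - θ 0 = equalizedAngle N := by
    have := hprog (N - 1) le_rfl
    rw [h1, ← natCast_sub_one_mul_equalizedAngle (N := N) (by omega)] at this
    exact (mul_left_cancel₀ (by exact_mod_cast (by omega : N - 1 ≠ 0)) this).symm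
  simpa [hθ1] using hprog

lemma sin_sq_arcsin_sqrt {p : ℝ} (hp₀ : 0 ≤ p) (hp₁ : p ≤ 1) : sin (arcsin √p) ^ 2 = p := by
  rw [sin_arcsin (by linarith [sqrt_nonneg p]) (sqrt_le_one.2 hp₁), sq_sqrt hp₀]

theorem IsEqualizedSol.eq_equalizedLevel {N : ℕ} (hN : 3 ≤ N) {t : ℕ → ℝ}
    (ht : IsEqualizedSol N (fun _ => 1) t) :
    ∀ k ≤ N - 1, t k = equalizedLevel N k := by
  obtain ⟨r, h0, h1, hstep, hrate⟩ := ht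
  have hmono : StrictMonoOn t (Iic (N - 1)) :=
    strictMonoOn_Iic_of_lt_succ fun m hm => by simpa using hstep m hm
  have hbd : ∀ k ≤ N - 1, t k ∈ Icc 0 1 := fun k hk =>
    ⟨h0 ▸ hmono.monotoneOn (mem_Iic.2 (Nat.zero_le _)) (mem_Iic.2 hk) (Nat.zero_le k),
      h1 ▸ hmono.monotoneOn (mem_Iic.2 hk) (mem_Iic.2 le_rfl) hk⟩
  set θ : ℕ → ℝ := fun k => arcsin √(t k)
  have ht_sin : ∀ k ≤ N - 1, t k = sin (θ k) ^ 2 := fun k hk =>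
    (sin_sq_arcsin_sqrt (hbd k hk).1 (hbd k hk).2).symm
  have hθ_mem : ∀ k ≤ N - 1, θ k ∈ Icc 0 (π / 2) := fun k _ =>
    ⟨arcsin_nonneg.2 (sqrt_nonneg _), arcsin_le_pi_div_two _⟩
  have hθ_mono : StrictMonoOn θ (Iic (N - 1)) := fun a ha b hb hab =>
    strictMonoOn_arcsin ⟨by linarith [sqrt_nonneg (t a)], sqrt_le_one.2 (hbd a ha).2⟩
      ⟨by linarith [sqrt_nonneg (t b)], sqrt_le_one.2 (hbd b hb).2⟩
      (sqrt_lt_sqrt (hbd a ha).1 (hmono ha hb hab))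
  have hθ_eq : ∀ k ≤ N - 1, θ k = k * equalizedAngle N := by
    refine eq_natCast_mul_equalizedAngle_of_rate_eq (r := r) hN hθ_mono (by simp [θ, h0])
      (by simp [θ, h1]) fun i hi => ?_
    rw [← hrate (i + 1) (by omega) hi,
      rateAt_one_eq_of_sin_sq (i := i + 1) h0 h1 hθ_mem ht_sin (by omega) hi, Nat.add_sub_cancel]
  intro k hk
  rw [ht_sin k hk, hθ_eq k hk, equalizedLevel]

lemma bisectLevel_sin_sq {x y : ℝ} (hx : 0 ≤ x) (hxy : x < y) (hy : y ≤ π / 2) :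
    bisectLevel (sin x ^ 2) (sin y ^ 2) = sin ((x + y) / 2) ^ 2 := by
  have hsin : sin ((y - x) / 2) ≠ 0 :=
    (sin_pos_of_pos_of_lt_pi (by linarith) (by linarith [pi_pos])).ne'
  have hcos : cos ((x + y) / 2) ≠ 0 :=
    (cos_pos_of_mem_Ioo ⟨by linarith [pi_pos], by linarith⟩).ne'
  rw [bisectLevel, ← cos_sq', ← cos_sq',
    sqrt_sq (sin_nonneg_of_nonneg_of_le_pi hx (by linarith [pi_pos])),
    sqrt_sq (sin_nonneg_of_nonneg_of_le_pi (by linarith) (by linarith [pi_pos])),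
    sqrt_sq (cos_nonneg_of_mem_Icc ⟨by linarith [pi_pos], by linarith⟩),
    sqrt_sq (cos_nonneg_of_mem_Icc ⟨by linarith [pi_pos], by linarith⟩),
    cos_sub_cos, sin_sub_sin, show (x - y) / 2 = -((y - x) / 2) by ring, sin_neg, add_comm y x]
  field_simp
  linear_combination -sin ((x + y) / 2) ^ 2 * sin_sq_add_cos_sq ((x + y) / 2)

lemma one_sub_sqrt_one_sub_sin_sq_two_mul {x : ℝ} (hx : 0 ≤ cos (2 * x)) :
    (1 - √(1 - sin (2 * x) ^ 2)) / 2 = sin x ^ 2 := by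
  rw [← cos_sq', sqrt_sq hx, cos_two_mul, ← sin_sq_add_cos_sq x]
  ring

lemma one_add_sqrt_cos_sq_two_mul {x : ℝ} (hx : 0 ≤ cos (2 * x)) :
    (1 + √(cos (2 * x) ^ 2)) / 2 = cos x ^ 2 := by
  rw [sqrt_sq hx, cos_two_mul]
  ring

lemma equalizedLevel_doubling_even (M j : ℕ) :
    equalizedLevel (2 * M - 1) (2 * j) = equalizedLevel M j := by
  rw [equalizedLevel, equalizedLevel, equalizedAngle_eq_two_mul M]
  push_cast
  ring_nf

lemma cos_two_mul_equalizedAngle_nonneg {M : ℕ} (hM : 2 ≤ M) :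
    0 ≤ cos (2 * equalizedAngle (2 * M - 1)) := by
  have hmem := natCast_mul_equalizedAngle_mem_Icc (k := 1) hM (by omega)
  rw [Nat.cast_one, one_mul, equalizedAngle_eq_two_mul M] at hmem
  exact cos_nonneg_of_mem_Icc ⟨by linarith [hmem.1, pi_pos], hmem.2⟩

lemma equalizedLevel_doubling_one {M : ℕ} (hM : 2 ≤ M) :
    equalizedLevel (2 * M - 1) 1 = (1 - √(1 - equalizedLevel M 1)) / 2 := by
  rw [equalizedLevel, equalizedLevel, equalizedAngle_eq_two_mul M, Nat.cast_one, one_mul, one_mul]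
  exact (one_sub_sqrt_one_sub_sin_sq_two_mul (cos_two_mul_equalizedAngle_nonneg hM)).symm

lemma equalizedLevel_doubling_last {M : ℕ} (hM : 2 ≤ M) :
    equalizedLevel (2 * M - 1) (2 * M - 3) = (1 + √(equalizedLevel M (M - 2))) / 2 := by
  have hπ := natCast_sub_one_mul_equalizedAngle (N := 2 * M - 1) (by omega)
  rw [show 2 * M - 1 - 1 = 2 * (M - 2) + 2 by omega] at hπ
  rw [equalizedLevel, equalizedLevel, equalizedAngle_eq_two_mul M,
    show 2 * M - 3 = 2 * (M - 2) + 1 by omega]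
  push_cast at hπ ⊢
  set ε := equalizedAngle (2 * M - 1)
  rw [show (2 * ((M - 2 : ℕ) : ℝ) + 1) * ε = π / 2 - ε by linarith,
    show ((M - 2 : ℕ) : ℝ) * (2 * ε) = π / 2 - 2 * ε by linarith, sin_pi_div_two_sub,
    sin_pi_div_two_sub]
  exact (one_add_sqrt_cos_sq_two_mul (cos_two_mul_equalizedAngle_nonneg hM)).symm

lemma equalizedLevel_doubling_odd {M j : ℕ} (hj : j + 1 ≤ M - 1) :
    equalizedLevel (2 * M - 1) (2 * j + 1) =
      bisectLevel (equalizedLevel M j) (equalizedLevel M (j + 1)) := by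
  have hmem := natCast_mul_equalizedAngle_mem_Icc (N := M) (by omega) hj
  have hε := equalizedAngle_pos (N := M) (by omega)
  rw [equalizedLevel, equalizedLevel, equalizedLevel, bisectLevel_sin_sq (by positivity)
    (by gcongr; linarith) hmem.2, equalizedAngle_eq_two_mul M]
  push_cast
  ring_nf

/-- **Doubling the number of levels (uniform weights).**
Let `t = t^M` be the equalized solution with uniform weights and `M` levels.  Define `t'` by
`t'_{2i} = t_i`, `t'_1 = (1-√(1-t₁))/2`, `t'_{2M-3} = (1+√(t_{M-2}))/2`, and for odd `k` with
`3 ≤ k ≤ 2M-5`, `t'_k = c/(1+c)` where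
`c = [(√(1-t'_{k+1}) - √(1-t'_{k-1}))/(√(t'_{k-1}) - √(t'_{k+1}))]²`.
Then `t'` is the equalized solution with uniform weights and `2M-1` levels. -/
theorem equalized_doubling
    (M : ℕ) (hM : 3 ≤ M) (t t' : ℕ → ℝ)
    (ht : IsEqualizedSol M (fun _ => (1 : ℝ)) t)
    (heven : ∀ i, i ≤ M - 1 → t' (2 * i) = t i)
    (hfirst : t' 1 = (1 - Real.sqrt (1 - t 1)) / 2)
    (hlast : t' (2 * M - 3) = (1 + Real.sqrt (t (M - 2))) / 2)
    (hodd : ∀ k, Odd k → 3 ≤ k → k ≤ 2 * M - 5 →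
      t' k =
        (((Real.sqrt (1 - t' (k + 1)) - Real.sqrt (1 - t' (k - 1))) /
            (Real.sqrt (t' (k - 1)) - Real.sqrt (t' (k + 1)))) ^ 2) /
          (1 + ((Real.sqrt (1 - t' (k + 1)) - Real.sqrt (1 - t' (k - 1))) /
            (Real.sqrt (t' (k - 1)) - Real.sqrt (t' (k + 1)))) ^ 2)) :
    IsEqualizedSol (2 * M - 1) (fun _ => (1 : ℝ)) t' := by
  have ht' := ht.eq_equalizedLevel hM
  refine isEqualizedSol_of_eq_equalizedLevel (by omega) fun k hk => ?_
  obtain ⟨j, rfl | rfl⟩ := Nat.even_or_odd' k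
  · rw [heven j (by omega), ht' j (by omega), equalizedLevel_doubling_even]
  rcases Nat.eq_zero_or_pos j with rfl | hj₀
  · rw [hfirst, ht' 1 (by omega), equalizedLevel_doubling_one (by omega)]
  rcases eq_or_lt_of_le (show j ≤ M - 2 by omega) with rfl | hj
  · rw [show 2 * (M - 2) + 1 = 2 * M - 3 by omega, hlast, ht' _ (by omega),
      equalizedLevel_doubling_last (by omega)]
  have h := hodd (2 * j + 1) ⟨j, rfl⟩ (by omega) (by omega)
  rw [Nat.add_sub_cancel, show 2 * j + 1 + 1 = 2 * (j + 1) by ring, heven j (by omega),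
    heven (j + 1) (by omega), ht' j (by omega), ht' (j + 1) (by omega)] at h
  rw [equalizedLevel_doubling_odd (by omega)]
  exact h
end

section
/- Let M ≥ 3 and let g₁ ≤ g₂ ≤ ⋯ ≤ g_{M−2} be positive nondecreasing weights. Then the equalized solution t* = (t*₀,…,t*_{M−1}) for these weights satisfies t*_{M−2} ≥ 1 − 1/(M−1). -/
/-
Write `G = g_{M-2}` for the largest weight and `d_i = t_i - t_{i-1}` for the gaps. Every rate
is at most `-G·log(1 - d_i)`: for `r₁` this is monotonicity in the weight, and for a middle rate
`r_{g,h}(p,q)` with `g ≤ h` it follows from the lower bound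
`(1-p)^a (1-q)^(1-a) + p^a q^(1-a) ≥ (1 - (q-p))^(1-a)` for `a = g/(g+h) ≤ 1/2`, a consequence of
the concavity of the weighted geometric mean `(x, y) ↦ x^a y^(1-a)` along the segment of pairs
`(p, q)` with fixed gap. Since the last rate is `-G·log t_{M-2}`, equalization forces
`1 - d_i ≤ t_{M-2}` for every gap, and the `M - 1` gaps add up to `1`.
-/

open Real

noncomputable def bernoulliChernoffCoeff (a p q : ℝ) : ℝ :=
  (1 - p) ^ a * (1 - q) ^ (1 - a) + p ^ a * q ^ (1 - a)

lemma pairRate_eq_neg_mul_log_bernoulliChernoffCoeff {g h : ℝ} (hgh : g + h ≠ 0) (p q : ℝ) :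
    pairRate g h p q = -(g + h) * log (bernoulliChernoffCoeff (g / (g + h)) p q) := by
  have h_one_sub : 1 - g / (g + h) = h / (g + h) := by field_simp; ring
  rw [pairRate, bernoulliChernoffCoeff, h_one_sub]

lemma rpow_mul_rpow_le_tangent {a x y X Y : ℝ} (ha₀ : 0 ≤ a) (ha₁ : a ≤ 1) (hx : 0 ≤ x)
    (hy : 0 ≤ y) (hX : 0 < X) (hY : 0 < Y) :
    x ^ a * y ^ (1 - a) ≤ X ^ a * Y ^ (1 - a) * (a * (x / X) + (1 - a) * (y / Y)) := by
  have amgm := geom_mean_le_arith_mean2_weighted ha₀ (sub_nonneg.2 ha₁)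
    (div_nonneg hx hX.le) (div_nonneg hy hY.le) (add_sub_cancel a 1)
  rw [div_rpow hx hX.le, div_rpow hy hY.le, div_mul_div_comm,
    div_le_iff₀ (by positivity)] at amgm
  linarith

lemma rpow_mul_rpow_concave {a w x₁ y₁ x₂ y₂ : ℝ} (ha₀ : 0 ≤ a) (ha₁ : a ≤ 1)
    (hw₀ : 0 ≤ w) (hw₁ : w ≤ 1) (hx₁ : 0 ≤ x₁) (hy₁ : 0 ≤ y₁) (hx₂ : 0 ≤ x₂) (hy₂ : 0 ≤ y₂)
    (hX : 0 < w * x₁ + (1 - w) * x₂) (hY : 0 < w * y₁ + (1 - w) * y₂) :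
    w * (x₁ ^ a * y₁ ^ (1 - a)) + (1 - w) * (x₂ ^ a * y₂ ^ (1 - a))
      ≤ (w * x₁ + (1 - w) * x₂) ^ a * (w * y₁ + (1 - w) * y₂) ^ (1 - a) := by
  set X := w * x₁ + (1 - w) * x₂ with hX_def
  set Y := w * y₁ + (1 - w) * y₂ with hY_def
  have h₁ := rpow_mul_rpow_le_tangent ha₀ ha₁ hx₁ hy₁ hX hY
  have h₂ := rpow_mul_rpow_le_tangent ha₀ ha₁ hx₂ hy₂ hX hY
  have hw₁' : 0 ≤ 1 - w := sub_nonneg.2 hw₁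
  calc w * (x₁ ^ a * y₁ ^ (1 - a)) + (1 - w) * (x₂ ^ a * y₂ ^ (1 - a))
      ≤ w * (X ^ a * Y ^ (1 - a) * (a * (x₁ / X) + (1 - a) * (y₁ / Y)))
        + (1 - w) * (X ^ a * Y ^ (1 - a) * (a * (x₂ / X) + (1 - a) * (y₂ / Y))) := by
        gcongr
    _ = X ^ a * Y ^ (1 - a) * (a * (X / X) + (1 - a) * (Y / Y)) := by
        rw [hX_def, hY_def]; ring
    _ = X ^ a * Y ^ (1 - a) := by
        rw [div_self hX.ne', div_self hY.ne']; ring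

/-- Both pairs are convex combinations, with weight `w = p / (1 - (q - p))`, of two pairs at
which one of the two geometric means is `0`. -/
lemma one_sub_sub_rpow_le_bernoulliChernoffCoeff {a p q : ℝ} (ha₀ : 0 < a) (ha : a ≤ 1 / 2)
    (hp : 0 < p) (hpq : p ≤ q) (hq : q < 1) :
    (1 - (q - p)) ^ (1 - a) ≤ bernoulliChernoffCoeff a p q := by
  set s := 1 - (q - p)
  have hs₀ : 0 < s := by linarith
  have hs₁ : s ≤ 1 := by linarith
  set w := p / s
  have hws : w * s = p := div_mul_cancel₀ p hs₀.ne'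
  have hw₀ : 0 ≤ w := by positivity
  have hw₁ : w ≤ 1 := (div_le_one hs₀).2 (by linarith)
  have h_zero_rpow : (0 : ℝ) ^ (1 - a) = 0 := zero_rpow (by linarith)
  have h_first : (1 - w) * s ^ (1 - a) ≤ (1 - p) ^ a * (1 - q) ^ (1 - a) := by
    have h := rpow_mul_rpow_concave (x₁ := 1 - s) (y₁ := 0) (x₂ := 1) (y₂ := s) ha₀.le
      (by linarith) hw₀ hw₁ (by linarith) le_rfl zero_le_one hs₀.le (by nlinarith) (by nlinarith)
    rwa [h_zero_rpow, one_rpow, show w * (1 - s) + (1 - w) * 1 = 1 - p by linarith,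
      show w * 0 + (1 - w) * s = 1 - q by linarith, mul_zero, mul_zero, zero_add, one_mul] at h
  have h_second : w * s ^ a ≤ p ^ a * q ^ (1 - a) := by
    have h := rpow_mul_rpow_concave (x₁ := s) (y₁ := 1) (x₂ := 0) (y₂ := 1 - s) ha₀.le
      (by linarith) hw₀ hw₁ hs₀.le zero_le_one le_rfl (by linarith) (by nlinarith) (by nlinarith)
    rwa [zero_rpow ha₀.ne', show w * s + (1 - w) * 0 = p by linarith,
      show w * 1 + (1 - w) * (1 - s) = q by linarith, zero_mul, mul_zero, add_zero, one_rpow,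
      mul_one] at h
  have h_pow : s ^ (1 - a) ≤ s ^ a := rpow_le_rpow_of_exponent_ge hs₀ hs₁ (by linarith)
  calc s ^ (1 - a) = (1 - w) * s ^ (1 - a) + w * s ^ (1 - a) := by ring
    _ ≤ (1 - w) * s ^ (1 - a) + w * s ^ a := by gcongr
    _ ≤ bernoulliChernoffCoeff a p q := add_le_add h_first h_second

lemma pairRate_le_neg_mul_log_one_sub_sub {g h p q : ℝ} (hg : 0 < g) (hgh : g ≤ h) (hp : 0 < p)
    (hpq : p ≤ q) (hq : q < 1) : pairRate g h p q ≤ -h * log (1 - (q - p)) := by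
  have hsum : 0 < g + h := by linarith
  have hd : 0 < 1 - (q - p) := by linarith
  have h_log := log_le_log (rpow_pos_of_pos hd _) <| one_sub_sub_rpow_le_bernoulliChernoffCoeff
    (div_pos hg hsum) ((div_le_iff₀ hsum).2 (by linarith)) hp hpq hq
  rw [log_rpow hd] at h_log
  calc pairRate g h p q
      = -(g + h) * log (bernoulliChernoffCoeff (g / (g + h)) p q) :=
        pairRate_eq_neg_mul_log_bernoulliChernoffCoeff hsum.ne' p q
    _ ≤ -(g + h) * ((1 - g / (g + h)) * log (1 - (q - p))) :=
        mul_le_mul_of_nonpos_left h_log (by linarith)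
    _ = -h * log (1 - (q - p)) := by field_simp; ring

lemma mul_le_sub_of_forall_le_sub_succ {t : ℕ → ℝ} {c : ℝ} {n : ℕ}
    (h : ∀ i < n, c ≤ t (i + 1) - t i) : n * c ≤ t n - t 0 := by
  have h_sum := Finset.card_nsmul_le_sum (Finset.range n) (fun i ↦ t (i + 1) - t i) c
    fun i hi ↦ h i (Finset.mem_range.1 hi)
  rwa [Finset.card_range, nsmul_eq_mul, Finset.sum_range_sub] at h_sum

namespace IsEqualizedWithRate

variable {M : ℕ} {g t : ℕ → ℝ} {r : ℝ}

lemma strictMonoOn (h : IsEqualizedWithRate M g t r) : StrictMonoOn t (Set.Iic (M - 1)) :=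
  strictMonoOn_Iic_of_lt_succ h.2.2.1

lemma apply_lt_apply (h : IsEqualizedWithRate M g t r) {j k : ℕ} (hjk : j < k) (hk : k ≤ M - 1) :
    t j < t k :=
  h.strictMonoOn (Set.mem_Iic.2 (by omega)) (Set.mem_Iic.2 hk) hjk

lemma apply_le_apply (h : IsEqualizedWithRate M g t r) {j k : ℕ} (hjk : j ≤ k) (hk : k ≤ M - 1) :
    t j ≤ t k :=
  h.strictMonoOn.monotoneOn (Set.mem_Iic.2 (by omega)) (Set.mem_Iic.2 hk) hjk

lemma mem_Ioo_s9 (h : IsEqualizedWithRate M g t r) {i : ℕ} (hi₁ : 1 ≤ i) (hi : i ≤ M - 2) :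
    t i ∈ Set.Ioo 0 1 :=
  ⟨h.1 ▸ h.apply_lt_apply (by omega) (by omega), h.2.1 ▸ h.apply_lt_apply (by omega) le_rfl⟩

lemma neg_mul_log_last_eq (h : IsEqualizedWithRate M g t r) (hM : 3 ≤ M) :
    -g (M - 2) * log (t (M - 2)) = r := by
  have h_rate := h.2.2.2 (M - 1) (by omega) le_rfl
  rwa [rateAt, if_neg (by omega), if_pos rfl] at h_rate

lemma rate_le_neg_mul_log_one_sub_gap (h : IsEqualizedWithRate M g t r) (hM : 3 ≤ M)
    (hg : ∀ i, 1 ≤ i → i ≤ M - 2 → 0 < g i)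
    (hmono : ∀ i j, 1 ≤ i → i ≤ j → j ≤ M - 2 → g i ≤ g j) {i : ℕ} (hi : i < M - 1) :
    r ≤ -g (M - 2) * log (1 - (t (i + 1) - t i)) := by
  have h_step : t i ≤ t (i + 1) := h.apply_le_apply (Nat.le_succ i) hi
  have h_gap_lt_one : t (i + 1) - t i < 1 := by
    rcases Nat.eq_zero_or_pos i with rfl | hi₀
    · linarith [h.1, (h.mem_Ioo_s9 le_rfl (by omega)).2]
    · linarith [h.2.1 ▸ h.apply_le_apply (show i + 1 ≤ M - 1 by omega) le_rfl,
        (h.mem_Ioo_s9 hi₀ (by omega)).1]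
  have h_log_nonpos : log (1 - (t (i + 1) - t i)) ≤ 0 := log_nonpos (by linarith) (by linarith)
  have h_le_top {k : ℕ} (hk₁ : 1 ≤ k) (hk : k ≤ M - 2) :
      -g k * log (1 - (t (i + 1) - t i)) ≤ -g (M - 2) * log (1 - (t (i + 1) - t i)) :=
    mul_le_mul_of_nonpos_right (neg_le_neg (hmono k (M - 2) hk₁ hk le_rfl)) h_log_nonpos
  by_cases h_last : i = M - 2
  · rw [← h.neg_mul_log_last_eq hM, h_last, show M - 2 + 1 = M - 1 by omega, h.2.1,
      sub_sub_cancel]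
  rcases Nat.eq_zero_or_pos i with rfl | hi₀
  · have h_rate_first := h.2.2.2 1 le_rfl (by omega)
    rw [rateAt, if_pos rfl] at h_rate_first
    calc r = -g 1 * log (1 - (t (0 + 1) - t 0)) := by rw [← h_rate_first, h.1, sub_zero]
      _ ≤ _ := h_le_top le_rfl (by omega)
  · have h_rate_mid := h.2.2.2 (i + 1) (by omega) (by omega)
    rw [rateAt, if_neg (by omega), if_neg (by omega), Nat.add_sub_cancel] at h_rate_mid
    rw [← h_rate_mid]
    exact (pairRate_le_neg_mul_log_one_sub_sub (hg i hi₀ (by omega))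
      (hmono i (i + 1) hi₀ (by omega) (by omega)) (h.mem_Ioo_s9 hi₀ (by omega)).1 h_step
      (h.mem_Ioo_s9 (by omega) (by omega)).2).trans (h_le_top (by omega) (by omega))

lemma one_sub_le_gap (h : IsEqualizedWithRate M g t r) (hM : 3 ≤ M)
    (hg : ∀ i, 1 ≤ i → i ≤ M - 2 → 0 < g i)
    (hmono : ∀ i j, 1 ≤ i → i ≤ j → j ≤ M - 2 → g i ≤ g j) {i : ℕ} (hi : i < M - 1) :
    1 - t (M - 2) ≤ t (i + 1) - t i := by
  have h_le := (h.neg_mul_log_last_eq hM).le.trans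
    (h.rate_le_neg_mul_log_one_sub_gap hM hg hmono hi)
  rw [neg_mul, neg_mul, neg_le_neg_iff, mul_le_mul_iff_right₀ (hg (M - 2) (by omega) le_rfl)]
    at h_le
  have h_pos := (h.mem_Ioo_s9 (show 1 ≤ M - 2 by omega) le_rfl).1
  rcases le_or_gt (1 - (t (i + 1) - t i)) 0 with h_nonpos | h_pos'
  · linarith
  · linarith [(log_le_log_iff h_pos' h_pos).1 h_le]

end IsEqualizedWithRate

/-- **Lower bound on the last level for nondecreasing weights.**
For `M ≥ 3` and positive nondecreasing weights `g₁ ≤ ⋯ ≤ g_{M-2}`, the equalized solution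
satisfies `t*_{M-2} ≥ 1 - 1/(M-1)`. -/
theorem equalized_last_level_lower_bound
    (M : ℕ) (hM : 3 ≤ M) (g : ℕ → ℝ)
    (hg : ∀ i, 1 ≤ i → i ≤ M - 2 → 0 < g i)
    (hmono : ∀ i j, 1 ≤ i → i ≤ j → j ≤ M - 2 → g i ≤ g j)
    (t : ℕ → ℝ) (ht : IsEqualizedSol M g t) :
    1 - 1 / ((M : ℝ) - 1) ≤ t (M - 2) := by
  obtain ⟨r, h⟩ := ht
  have h_sum := mul_le_sub_of_forall_le_sub_succ fun i hi ↦ h.one_sub_le_gap hM hg hmono hi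
  rw [h.1, h.2.1, sub_zero, Nat.cast_sub (by omega), Nat.cast_one] at h_sum
  have hM_pos : (0 : ℝ) < M - 1 := by
    have : (3 : ℝ) ≤ M := by exact_mod_cast hM
    linarith
  rw [sub_le_comm, le_div_iff₀ hM_pos]
  linarith
end
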